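/- arXiv:2605.21344 — 10 statements merged into one kernel-verified Lean document; each statement's English description precedes it below -/
import Mathlib

section
/- For all real numbers a > 0, κ > 0, A ≥ 0, b > 0 and z ∈ ℝ, one has A ≤ b(κ + e^z)A + (b(κ + e^z)/(4a))A² + (ab/(κ + e^z))·((1/b − κ − e^z)⁺)², where (r)⁺ := max(r, 0). -/
/-!
With `c = κ + e^z`, write `A = b c A + b A (1/b - c)` and bound `A (1/b - c) ≤ A (1/b - c)⁺`.
The weights `c/(4a)` and `a/c` multiply to `1/4`, so the weighted AM–GM inequality
`x y ≤ c/(4a) x² + a/c y²` absorbs the cross term.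
-/

theorem mul_le_div_mul_sq_add_div_mul_sq {a c : ℝ} (ha : 0 < a) (hc : 0 < c) (x y : ℝ) :
    x * y ≤ c / (4 * a) * x ^ 2 + a / c * y ^ 2 := by
  rw [div_mul_eq_mul_div, div_mul_eq_mul_div, div_add_div _ _ (by positivity) hc.ne',
    le_div_iff₀ (by positivity)]
  nlinarith [sq_nonneg (c * x - 2 * a * y)]

theorem le_mul_add_div_mul_sq_add_mul_max_sq {a b c A : ℝ} (ha : 0 < a) (hb : 0 < b)
    (hc : 0 < c) (hA : 0 ≤ A) :
    A ≤ b * c * A + b * c / (4 * a) * A ^ 2 + a * b / c * (max (1 / b - c) 0) ^ 2 :=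
  calc A = b * c * A + b * (A * (1 / b - c)) := by field_simp; ring
    _ ≤ b * c * A + b * (A * max (1 / b - c) 0) := by gcongr; exact le_max_left _ _
    _ ≤ b * c * A + b * (c / (4 * a) * A ^ 2 + a / c * (max (1 / b - c) 0) ^ 2) := by
        gcongr; exact mul_le_div_mul_sq_add_div_mul_sq ha hc _ _
    _ = b * c * A + b * c / (4 * a) * A ^ 2 + a * b / c * (max (1 / b - c) 0) ^ 2 := by ring

/-- Inequality (5.1) of the paper: for all `a > 0`, `κ > 0`, `A ≥ 0`, `b > 0`, `z ∈ ℝ`,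
`A ≤ b(κ + e^z)A + (b(κ + e^z)/(4a))A² + (ab/(κ + e^z))·((1/b − κ − e^z)⁺)²`. -/
theorem dads_basic_inequality (a κ A b z : ℝ)
    (ha : 0 < a) (hκ : 0 < κ) (hA : 0 ≤ A) (hb : 0 < b) :
    A ≤ b * (κ + Real.exp z) * A + (b * (κ + Real.exp z) / (4 * a)) * A ^ 2 +
      (a * b / (κ + Real.exp z)) * (max (1 / b - κ - Real.exp z) 0) ^ 2 := by
  simpa only [sub_sub] using
    le_mul_add_div_mul_sq_add_mul_max_sq ha hb (by positivity : 0 < κ + Real.exp z) hA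
end

section
/- For all real numbers a > 0, κ > 0, R > 0, b > 0, z ∈ ℝ, y ∈ ℝ and Θ ≥ 0, one has R²Θ²y² ≤ 2b(κ + e^z)³y² + b((κ + e^z)⁵/a)(κ⁻³ + 1)y⁴ + b((κ + e^z)³/(4a³))y⁸ + (2ab/(κ + e^z))·((1/b − κ − e^z)⁺)² + (a/(κ + e^z))·((RΘ − κ − e^z)⁺)⁴, where (r)⁺ := max(r, 0). -/
/-!
Write `E = κ + e^z`, `d = (1/b - E)⁺`, `q = (RΘ - E)⁺`. Then `RΘ ≤ E + q` and
`1 ≤ b(E + d)`, so `R²Θ²y² ≤ 2E²y² + 2q²y²`, and multiplying the terms without `b` by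
`b(E + d) ≥ 1` lets every remaining cross term be split by weighted AM-GM,
`2uv ≤ u²/c + cv²` with `c = a/E`; the factor `κ⁻³` absorbs `E² ≤ E⁵κ⁻³`.
-/

theorem two_mul_le_sq_div_add_mul_sq {c : ℝ} (hc : 0 < c) (u v : ℝ) :
    2 * u * v ≤ u ^ 2 / c + c * v ^ 2 := by
  have h : u ^ 2 / c + c * v ^ 2 - 2 * u * v = (u - c * v) ^ 2 / c := by field_simp; ring
  rw [← sub_nonneg, h]
  positivity

theorem le_add_max_sub_zero (x c : ℝ) : x ≤ c + max (x - c) 0 := by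
  linarith [le_max_left (x - c) 0]

theorem one_le_mul_add_max_inv_sub {b : ℝ} (hb : 0 < b) (E : ℝ) :
    1 ≤ b * (E + max (1 / b - E) 0) :=
  (div_le_iff₀' hb).mp (le_add_max_sub_zero _ _)

theorem sq_le_two_mul_sq_add_two_mul_sq_max {s : ℝ} (hs : 0 ≤ s) (E : ℝ) :
    s ^ 2 ≤ 2 * E ^ 2 + 2 * max (s - E) 0 ^ 2 :=
  calc s ^ 2 ≤ (E + max (s - E) 0) ^ 2 := pow_le_pow_left₀ hs (le_add_max_sub_zero s E) 2
    _ ≤ 2 * E ^ 2 + 2 * max (s - E) 0 ^ 2 := by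
      linarith [add_sq_le (a := E) (b := max (s - E) 0)]

theorem sq_mul_sq_le_of_one_le_mul_add {a b κ E d q s y : ℝ} (ha : 0 < a) (hb : 0 < b)
    (hκ : 0 < κ) (hκE : κ ≤ E) (hbd : 1 ≤ b * (E + d)) (hs : s ^ 2 ≤ 2 * E ^ 2 + 2 * q ^ 2) :
    s ^ 2 * y ^ 2 ≤
      2 * b * E ^ 3 * y ^ 2 + b * (E ^ 5 / a) * (κ⁻¹ ^ 3 + 1) * y ^ 4 +
      b * (E ^ 3 / (4 * a ^ 3)) * y ^ 8 + (2 * a * b / E) * d ^ 2 + (a / E) * q ^ 4 := by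
  have hE : 0 < E := hκ.trans_le hκE
  have hc : 0 < a / E := div_pos ha hE
  have hE_sq_le : E ^ 2 ≤ E ^ 5 * κ⁻¹ ^ 3 :=
    calc E ^ 2 ≤ E ^ 2 * (E / κ) ^ 3 :=
          le_mul_of_one_le_right (by positivity) (one_le_pow₀ ((one_le_div hκ).mpr hκE))
      _ = E ^ 5 * κ⁻¹ ^ 3 := by ring
  calc s ^ 2 * y ^ 2 ≤ 2 * E ^ 2 * y ^ 2 + 2 * q ^ 2 * y ^ 2 := by
        linarith [mul_le_mul_of_nonneg_right hs (sq_nonneg y)]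
    _ ≤ b * (E + d) * (2 * E ^ 2 * y ^ 2) + ((q ^ 2) ^ 2 / (E / a) + E / a * (y ^ 2) ^ 2) :=
        add_le_add (le_mul_of_one_le_left (by positivity) hbd)
          (two_mul_le_sq_div_add_mul_sq (div_pos hE ha) _ _)
    _ ≤ b * (E + d) * (2 * E ^ 2 * y ^ 2) +
          ((q ^ 2) ^ 2 / (E / a) + b * (E + d) * (E / a * (y ^ 2) ^ 2)) := by
        linarith [le_mul_of_one_le_left (by positivity : 0 ≤ E / a * (y ^ 2) ^ 2) hbd]
    _ = 2 * b * E ^ 3 * y ^ 2 + b * (E ^ 2 / a) * y ^ 4 + b * (2 * (E ^ 2 * y ^ 2) * d)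
          + b * (2 * (E / (2 * a) * y ^ 4) * d) + a / E * q ^ 4 := by
        field_simp; ring
    _ ≤ 2 * b * E ^ 3 * y ^ 2 + b * (E ^ 5 * κ⁻¹ ^ 3 / a) * y ^ 4
          + b * ((E ^ 2 * y ^ 2) ^ 2 / (a / E) + a / E * d ^ 2)
          + b * ((E / (2 * a) * y ^ 4) ^ 2 / (a / E) + a / E * d ^ 2) + a / E * q ^ 4 := by
        gcongr
        · exact two_mul_le_sq_div_add_mul_sq hc _ _
        · exact two_mul_le_sq_div_add_mul_sq hc _ _
    _ = _ := by field_simp; ring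

/-- The algebraic estimate underlying inequality (5.3) in the proof of Theorem 1:
for all `a > 0`, `κ > 0`, `R > 0`, `b > 0`, `z, y ∈ ℝ` and `Θ ≥ 0`,
`R²Θ²y² ≤ 2b(κ + e^z)³y² + b((κ + e^z)⁵/a)(κ⁻³ + 1)y⁴ + b((κ + e^z)³/(4a³))y⁸
  + (2ab/(κ + e^z))·((1/b − κ − e^z)⁺)² + (a/(κ + e^z))·((RΘ − κ − e^z)⁺)⁴`. -/
theorem dads_cross_term_estimate (a κ R b z y Θ : ℝ)
    (ha : 0 < a) (hκ : 0 < κ) (hR : 0 < R) (hb : 0 < b) (hΘ : 0 ≤ Θ) :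
    R ^ 2 * Θ ^ 2 * y ^ 2 ≤
      2 * b * (κ + Real.exp z) ^ 3 * y ^ 2 +
      b * ((κ + Real.exp z) ^ 5 / a) * (κ⁻¹ ^ 3 + 1) * y ^ 4 +
      b * ((κ + Real.exp z) ^ 3 / (4 * a ^ 3)) * y ^ 8 +
      (2 * a * b / (κ + Real.exp z)) * (max (1 / b - κ - Real.exp z) 0) ^ 2 +
      (a / (κ + Real.exp z)) * (max (R * Θ - κ - Real.exp z) 0) ^ 4 := by
  rw [← mul_pow, sub_sub, sub_sub]
  exact sq_mul_sq_le_of_one_le_mul_add ha hb hκ (le_add_of_nonneg_right (Real.exp_pos z).le)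
    (one_le_mul_add_max_inv_sub hb _)
    (sq_le_two_mul_sq_add_two_mul_sq_max (mul_nonneg hR.le hΘ) _)
end

section
/- Let a, κ, C > 0 be constants, let y, z, d ∈ ℝ, W ≥ 0, p ≥ 0, Θ₂ ≥ 0, b > 0, and let P₁, P₂, P₃ be real numbers satisfying P₁ ≥ (1/(4aκ⁶))(κ + 4aC + 4κ³ + 4aκp + 8aκ²), P₂ ≥ (1/(4a³κ⁵))((1/(16κ))(κ + 4aC + 4κ³ + 4aκp)² + κ² + a²p² + 4a²(κ³ + 1)), and P₃ ≥ (1/(64a⁷κ⁴))((κ² + a²p²)² + 16a⁴). Set u := −(κ + e^z)⁷(P₁ + P₂y² + P₃y⁶)y. Then b·y·u + Θ₂|y|(W + p|y|) + y·d ≤ −Cy² + (a/(κ + e^z))·(d² + W²/2 + ((Θ₂ − κ − e^z)⁺)² + ((Θ₂ − κ − e^z)⁺)⁴ + 2b·((1/b − κ − e^z)⁺)²), where (r)⁺ := max(r, 0). -/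
/-!
Write `E = κ + e^z`, `M = (Θ₂ - E)⁺` and `N = (1/b - E)⁺`, so that `Θ₂ ≤ M + E` and
`1 ≤ b (N + E)`. Young's inequality bounds the uncertain terms by `a / E` times `d², W², M², M⁴`
plus `α y² + β y⁴`. The factor `b (N + E) ≥ 1` lets the feedback absorb `α y² + β y⁴`: the part
carrying `N` costs `2 a b N² / E` by Young's inequality again, and the part carrying `E` is
dominated by the gains as soon as they satisfy (3.8)–(3.10) with `E` in place of `κ`. The gains
those conditions require decrease in `κ`, so they hold at `E ≥ κ`.
-/

theorem mul_le_mul_sq_add_sq_div {K : Type*} [Field K] [LinearOrder K] [IsStrictOrderedRing K]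
    {ε : K} (hε : 0 < ε) (x y : K) : x * y ≤ ε * x ^ 2 + y ^ 2 / (4 * ε) := by
  linear_combination two_mul_le_add_mul_sq (a := x) (b := y) (mul_pos two_pos hε) / 2

/- The coefficients of `y²` and `y⁴` left over when the uncertain terms are split by Young's
inequality. -/
noncomputable def youngSqCoeff (a p E : ℝ) : ℝ := E / (4 * a) + E ^ 3 / a + p * E

noncomputable def youngQuartCoeff (a p E : ℝ) : ℝ := E ^ 3 / (4 * a ^ 3) + p ^ 2 * E / (4 * a)

theorem uncertain_terms_le {a E W p M Θ : ℝ} (y d : ℝ) (ha : 0 < a) (hE : 0 < E) (hW : 0 ≤ W)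
    (hp : 0 ≤ p) (hΘ : Θ ≤ M + E) :
    Θ * |y| * (W + p * |y|) + y * d ≤
      youngSqCoeff a p E * y ^ 2 + youngQuartCoeff a p E * y ^ 4 +
        a / E * (d ^ 2 + W ^ 2 / 2 + M ^ 2 + M ^ 4) := by
  have hy : |y| ^ 2 = y ^ 2 := sq_abs y
  have hΘ' : Θ * |y| * (W + p * |y|) ≤ (M + E) * |y| * (W + p * |y|) := by gcongr
  have hd := mul_le_mul_sq_add_sq_div (div_pos hE (mul_pos four_pos ha)) y d
  have hEW := mul_le_mul_sq_add_sq_div (div_pos hE ha) (E * |y|) W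
  have hMW := mul_le_mul_sq_add_sq_div (div_pos hE ha) (M * |y|) W
  have hM := mul_le_mul_sq_add_sq_div (div_pos ha hE) (M ^ 2) (E / a * y ^ 2)
  have hMp := mul_le_mul_sq_add_sq_div (div_pos ha hE) M (p * y ^ 2)
  simp only [div_mul_eq_div_div, div_div_eq_mul_div] at hd hEW hMW hM hMp
  unfold youngSqCoeff youngQuartCoeff
  linear_combination
    hΘ' + hd + hEW + hMW + hM + hMp + (E / a * M ^ 2 + E ^ 3 / a + p * (M + E)) * hy

theorem feedback_absorbs_of_gains {a b E N α β P₁ P₂ P₃ : ℝ} (y : ℝ) (ha : 0 < a) (hE : 0 < E)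
    (hb : 0 ≤ b) (hbN : 1 ≤ b * (N + E)) (hα : 0 ≤ α) (hβ : 0 ≤ β)
    (h₁ : α ≤ E ^ 6 * P₁) (h₂ : β + α ^ 2 / (4 * a) ≤ E ^ 6 * P₂)
    (h₃ : β ^ 2 / (4 * a) ≤ E ^ 6 * P₃) :
    α * y ^ 2 + β * y ^ 4 ≤
      b * E ^ 7 * (P₁ + P₂ * y ^ 2 + P₃ * y ^ 6) * y ^ 2 + a / E * (2 * b * N ^ 2) := by
  have hS : α * y ^ 2 + β * y ^ 4 ≤ b * (N + E) * (α * y ^ 2 + β * y ^ 4) :=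
    le_mul_of_one_le_left (by positivity) hbN
  have hNα := mul_le_mul_sq_add_sq_div (div_pos ha hE) N (α * y ^ 2)
  have hNβ := mul_le_mul_sq_add_sq_div (div_pos ha hE) N (β * y ^ 4)
  simp only [div_mul_eq_div_div, div_div_eq_mul_div] at hNα hNβ
  have hEgains : E * (α * y ^ 2 + β * y ^ 4) + (α * y ^ 2) ^ 2 / 4 * E / a +
      (β * y ^ 4) ^ 2 / 4 * E / a ≤ E ^ 7 * (P₁ + P₂ * y ^ 2 + P₃ * y ^ 6) * y ^ 2 := by
    linear_combination (E * y ^ 2) * h₁ + (E * y ^ 4) * h₂ + (E * y ^ 8) * h₃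
  linear_combination hS + b * hNα + b * hNβ + b * hEgains

section GainTransfer

variable {a C p κ E P : ℝ}

theorem youngSqCoeff_le_of_gain (ha : 0 < a) (hC : 0 ≤ C) (hp : 0 ≤ p) (hκ : 0 < κ) (hκE : κ ≤ E)
    (hP : 1 / (4 * a * κ ^ 6) * (κ + 4 * a * C + 4 * κ ^ 3 + 4 * a * κ * p + 8 * a * κ ^ 2) ≤ P) :
    C + youngSqCoeff a p E ≤ E ^ 6 * P := by
  have hE : 0 < E := hκ.trans_le hκE
  have expand : ∀ x, 0 < x → (C + youngSqCoeff a p x) / x ^ 6 =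
      C / x ^ 6 + 1 / (4 * a) / x ^ 5 + 1 / a / x ^ 3 + p / x ^ 5 := by
    intro x hx
    unfold youngSqCoeff
    field_simp
    ring
  have slack : 1 / (4 * a * κ ^ 6) * (κ + 4 * a * C + 4 * κ ^ 3 + 4 * a * κ * p + 8 * a * κ ^ 2) -
      (C + youngSqCoeff a p κ) / κ ^ 6 = 2 / κ ^ 4 := by
    unfold youngSqCoeff
    field_simp
    ring
  rw [← div_le_iff₀' (by positivity)]
  calc (C + youngSqCoeff a p E) / E ^ 6 ≤ (C + youngSqCoeff a p κ) / κ ^ 6 := by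
        rw [expand E hE, expand κ hκ]
        gcongr
    _ ≤ P := by linarith [show 0 ≤ 2 / κ ^ 4 by positivity]

theorem youngQuartCoeff_le_of_gain (ha : 0 < a) (hC : 0 ≤ C) (hp : 0 ≤ p) (hκ : 0 < κ)
    (hκE : κ ≤ E)
    (hP : 1 / (4 * a ^ 3 * κ ^ 5) *
        (1 / (16 * κ) * (κ + 4 * a * C + 4 * κ ^ 3 + 4 * a * κ * p) ^ 2 +
          κ ^ 2 + a ^ 2 * p ^ 2 + 4 * a ^ 2 * (κ ^ 3 + 1)) ≤ P) :
    youngQuartCoeff a p E + (C + youngSqCoeff a p E) ^ 2 / (4 * a) ≤ E ^ 6 * P := by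
  have hE : 0 < E := hκ.trans_le hκE
  have expand : ∀ x, 0 < x →
      (youngQuartCoeff a p x + (C + youngSqCoeff a p x) ^ 2 / (4 * a)) / x ^ 6 =
        1 / (4 * a ^ 3) / x ^ 3 + p ^ 2 / (4 * a) / x ^ 5 +
          (C / x ^ 3 + 1 / (4 * a) / x ^ 2 + 1 / a + p / x ^ 2) ^ 2 / (4 * a) := by
    intro x hx
    unfold youngSqCoeff youngQuartCoeff
    field_simp
    ring
  have slack : 1 / (4 * a ^ 3 * κ ^ 5) *
        (1 / (16 * κ) * (κ + 4 * a * C + 4 * κ ^ 3 + 4 * a * κ * p) ^ 2 +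
          κ ^ 2 + a ^ 2 * p ^ 2 + 4 * a ^ 2 * (κ ^ 3 + 1)) -
      (youngQuartCoeff a p κ + (C + youngSqCoeff a p κ) ^ 2 / (4 * a)) / κ ^ 6 =
        (κ ^ 3 + 1) / (a * κ ^ 5) := by
    unfold youngSqCoeff youngQuartCoeff
    field_simp
    ring
  rw [← div_le_iff₀' (by positivity)]
  calc (youngQuartCoeff a p E + (C + youngSqCoeff a p E) ^ 2 / (4 * a)) / E ^ 6
      ≤ (youngQuartCoeff a p κ + (C + youngSqCoeff a p κ) ^ 2 / (4 * a)) / κ ^ 6 := by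
        rw [expand E hE, expand κ hκ]
        gcongr
    _ ≤ P := by linarith [show 0 ≤ (κ ^ 3 + 1) / (a * κ ^ 5) by positivity]

theorem youngQuartCoeff_sq_le_of_gain (ha : 0 < a) (hκ : 0 < κ) (hκE : κ ≤ E)
    (hP : 1 / (64 * a ^ 7 * κ ^ 4) * ((κ ^ 2 + a ^ 2 * p ^ 2) ^ 2 + 16 * a ^ 4) ≤ P) :
    youngQuartCoeff a p E ^ 2 / (4 * a) ≤ E ^ 6 * P := by
  have hE : 0 < E := hκ.trans_le hκE
  have expand : ∀ x, 0 < x → youngQuartCoeff a p x ^ 2 / (4 * a) / x ^ 6 =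
      (1 / (4 * a ^ 3) + p ^ 2 / (4 * a) / x ^ 2) ^ 2 / (4 * a) := by
    intro x hx
    unfold youngQuartCoeff
    field_simp
  have slack : 1 / (64 * a ^ 7 * κ ^ 4) * ((κ ^ 2 + a ^ 2 * p ^ 2) ^ 2 + 16 * a ^ 4) -
      youngQuartCoeff a p κ ^ 2 / (4 * a) / κ ^ 6 = 1 / (4 * a ^ 3 * κ ^ 4) := by
    unfold youngQuartCoeff
    field_simp
    ring
  rw [← div_le_iff₀' (by positivity)]
  calc youngQuartCoeff a p E ^ 2 / (4 * a) / E ^ 6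
      ≤ youngQuartCoeff a p κ ^ 2 / (4 * a) / κ ^ 6 := by
        rw [expand E hE, expand κ hκ]
        gcongr
    _ ≤ P := by linarith [show 0 ≤ 1 / (4 * a ^ 3 * κ ^ 4) by positivity]

end GainTransfer

theorem dads_feedback_domination_general (a κ C y z d W p Θ₂ b P₁ P₂ P₃ u : ℝ)
    (ha : 0 < a) (hκ : 0 < κ) (hC : 0 < C)
    (hW : 0 ≤ W) (hp : 0 ≤ p) (hb : 0 < b)
    (hP₁ : (1 / (4 * a * κ ^ 6)) * (κ + 4 * a * C + 4 * κ ^ 3 + 4 * a * κ * p + 8 * a * κ ^ 2)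
        ≤ P₁)
    (hP₂ : (1 / (4 * a ^ 3 * κ ^ 5)) *
        ((1 / (16 * κ)) * (κ + 4 * a * C + 4 * κ ^ 3 + 4 * a * κ * p) ^ 2 +
          κ ^ 2 + a ^ 2 * p ^ 2 + 4 * a ^ 2 * (κ ^ 3 + 1)) ≤ P₂)
    (hP₃ : (1 / (64 * a ^ 7 * κ ^ 4)) * ((κ ^ 2 + a ^ 2 * p ^ 2) ^ 2 + 16 * a ^ 4) ≤ P₃)
    (hu : u = -(κ + Real.exp z) ^ 7 * (P₁ + P₂ * y ^ 2 + P₃ * y ^ 6) * y) :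
    b * y * u + Θ₂ * |y| * (W + p * |y|) + y * d ≤
      -C * y ^ 2 + (a / (κ + Real.exp z)) *
        (d ^ 2 + W ^ 2 / 2 + (max (Θ₂ - κ - Real.exp z) 0) ^ 2 +
          (max (Θ₂ - κ - Real.exp z) 0) ^ 4 +
          2 * b * (max (1 / b - κ - Real.exp z) 0) ^ 2) := by
  set E := κ + Real.exp z
  set M := max (Θ₂ - κ - Real.exp z) 0
  set N := max (1 / b - κ - Real.exp z) 0
  have hκE : κ ≤ E := le_add_of_nonneg_right (Real.exp_pos z).le
  have hE : 0 < E := hκ.trans_le hκE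
  have hΘ : Θ₂ ≤ M + E := by linarith [le_max_left (Θ₂ - κ - Real.exp z) 0]
  have hbN : 1 ≤ b * (N + E) :=
    (div_le_iff₀' hb).1 (by linarith [le_max_left (1 / b - κ - Real.exp z) 0])
  have hfeedback : b * y * u = -(b * E ^ 7 * (P₁ + P₂ * y ^ 2 + P₃ * y ^ 6) * y ^ 2) := by
    rw [hu]
    ring
  have huncertain := uncertain_terms_le y d ha hE hW hp hΘ
  have habsorb := feedback_absorbs_of_gains y ha hE hb.le hbN
    (by unfold youngSqCoeff; positivity) (by unfold youngQuartCoeff; positivity)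
    (youngSqCoeff_le_of_gain ha hC.le hp hκ hκE hP₁)
    (youngQuartCoeff_le_of_gain ha hC.le hp hκ hκE hP₂)
    (youngQuartCoeff_sq_le_of_gain ha hκ hκE hP₃)
  linear_combination hfeedback + huncertain + habsorb

/-- The pointwise inequality combining (5.5)–(5.7) of the paper: the DADS feedback law
`u = −(κ + e^z)⁷(P₁ + P₂y² + P₃y⁶)y` with gains satisfying (3.8)–(3.10) dominates the
uncertain terms in the derivative of `V(y) = y²/2` along `ẏ = bu + L'θ₂ + d`.
Here `W` stands for `‖w‖`, `p` for `φ(y)` and `Θ₂` for `|θ₂|`. -/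
theorem dads_feedback_domination (a κ C y z d W p Θ₂ b P₁ P₂ P₃ u : ℝ)
    (ha : 0 < a) (hκ : 0 < κ) (hC : 0 < C)
    (hW : 0 ≤ W) (hp : 0 ≤ p) (hΘ₂ : 0 ≤ Θ₂) (hb : 0 < b)
    (hP₁ : (1 / (4 * a * κ ^ 6)) * (κ + 4 * a * C + 4 * κ ^ 3 + 4 * a * κ * p + 8 * a * κ ^ 2)
        ≤ P₁)
    (hP₂ : (1 / (4 * a ^ 3 * κ ^ 5)) *
        ((1 / (16 * κ)) * (κ + 4 * a * C + 4 * κ ^ 3 + 4 * a * κ * p) ^ 2 +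
          κ ^ 2 + a ^ 2 * p ^ 2 + 4 * a ^ 2 * (κ ^ 3 + 1)) ≤ P₂)
    (hP₃ : (1 / (64 * a ^ 7 * κ ^ 4)) * ((κ ^ 2 + a ^ 2 * p ^ 2) ^ 2 + 16 * a ^ 4) ≤ P₃)
    (hu : u = -(κ + Real.exp z) ^ 7 * (P₁ + P₂ * y ^ 2 + P₃ * y ^ 6) * y) :
    b * y * u + Θ₂ * |y| * (W + p * |y|) + y * d ≤
      -C * y ^ 2 + (a / (κ + Real.exp z)) *
        (d ^ 2 + W ^ 2 / 2 + (max (Θ₂ - κ - Real.exp z) 0) ^ 2 +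
          (max (Θ₂ - κ - Real.exp z) 0) ^ 4 +
          2 * b * (max (1 / b - κ - Real.exp z) 0) ^ 2) :=
  dads_feedback_domination_general a κ C y z d W p Θ₂ b P₁ P₂ P₃ u ha hκ hC hW hp hb hP₁ hP₂ hP₃ hu
end

section
/- Let C, Γ, ε, a, κ > 0 and B ≥ 0 be constants. Let z : [0, ∞) → ℝ be continuously differentiable and V : [0, ∞) → [0, ∞) be locally absolutely continuous, and suppose that for all t ≥ 0, z'(t) = Γe^{−z(t)}·max(V(t) − ε, 0), and for almost every t ≥ 0, V'(t) ≤ −2C·V(t) + aB/(min(1, κ)(1 + e^{z(t)})). Then for all t ≥ 0: z(0) ≤ z(t) ≤ ln( e^{z(0)} + (Γ/(2C))V(0) + aB·(2C(1 + e^{z(0)}) + εΓ)/(4C²ε·min(1, κ)(1 + e^{z(0)})) ). -/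
/-!
With `w = e^z` the update law reads `w' = Γ (V - ε)⁺`, so `w` is nondecreasing. Hence
`V' ≤ -2CV + β / (1 + w 0)` with `β = aB / min(1, κ)`, and Grönwall bounds `V` by
`V 0 + β / (2C(1 + w 0))`. Let `τ` be the last time with `w τ ≤ max (w 0) (β / (2Cε) - 1)`.
After `τ` the perturbation `β / (1 + w)` is at most `2Cε`, so `V - ε ≤ V τ · e^{-2C(t-τ)}`, and
integrating `w'` gives `w t ≤ w τ + Γ V τ / (2C)`.
-/

open MeasureTheory Set Real

lemma exists_last_le_of_continuousOn {f : ℝ → ℝ} {a b L : ℝ} (hab : a ≤ b)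
    (hf : ContinuousOn f (Icc a b)) (ha : f a ≤ L) :
    ∃ τ ∈ Icc a b, f τ ≤ L ∧ ∀ s ∈ Ioc τ b, L < f s := by
  set S := Icc a b ∩ f ⁻¹' Iic L
  have hS : IsClosed S := hf.preimage_isClosed_of_isClosed isClosed_Icc isClosed_Iic
  have hbdd : BddAbove S := ⟨b, fun x hx => hx.1.2⟩
  obtain ⟨hτ, hfτ⟩ : sSup S ∈ S := hS.csSup_mem ⟨a, ⟨le_rfl, hab⟩, ha⟩ hbdd
  refine ⟨sSup S, hτ, hfτ, fun s hs => not_le.mp fun hfs => ?_⟩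
  exact hs.1.not_ge (le_csSup hbdd ⟨⟨hτ.1.trans hs.1.le, hs.2⟩, hfs⟩)

section Primitive

variable {u u' : ℝ → ℝ} {a b : ℝ}

lemma continuousOn_of_eq_add_integral (hab : a ≤ b) (hint : IntervalIntegrable u' volume a b)
    (hftc : ∀ s ∈ Icc a b, u s = u a + ∫ r in a..s, u' r) : ContinuousOn u (Icc a b) := by
  have h := (intervalIntegral.continuousOn_primitive_interval' hint left_mem_uIcc).const_add (u a)
  rw [uIcc_of_le hab] at h
  exact h.congr hftc

lemma le_of_ae_deriv_nonpos_above {L : ℝ} (hab : a ≤ b) (hint : IntervalIntegrable u' volume a b)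
    (hftc : ∀ s ∈ Icc a b, u s = u a + ∫ r in a..s, u' r)
    (hu' : ∀ᵐ r ∂volume.restrict (Ioc a b), L < u r → u' r ≤ 0) (ha : u a ≤ L) : u b ≤ L := by
  obtain ⟨τ, hτ, huτ, habove⟩ :=
    exists_last_le_of_continuousOn hab (continuousOn_of_eq_add_integral hab hint hftc) ha
  have hincr : u b - u τ = ∫ r in τ..b, u' r := by
    rw [hftc b ⟨hab, le_rfl⟩, hftc τ hτ, add_sub_add_left_eq_sub,
      intervalIntegral.integral_interval_sub_left hint
        (hint.mono_set (uIcc_subset_uIcc left_mem_uIcc (mem_uIcc_of_le hτ.1 hτ.2)))]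
  have hnonpos : ∀ᵐ r ∂volume.restrict (Icc τ b), u' r ≤ 0 := by
    rw [← restrict_Ioc_eq_restrict_Icc]
    filter_upwards [ae_restrict_of_ae_restrict_of_subset (Ioc_subset_Ioc_left hτ.1) hu',
      ae_restrict_mem measurableSet_Ioc] with r hr hrτ using hr (habove r hrτ)
  have := intervalIntegral.integral_nonneg_of_ae_restrict hτ.2 (f := fun r => -u' r)
    (by filter_upwards [hnonpos] with r hr using neg_nonneg.mpr hr)
  rw [intervalIntegral.integral_neg] at this
  linarith

lemma sub_le_mul_exp_of_ae_deriv_le {k c : ℝ} (hk : 0 ≤ k)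
    (hint : IntervalIntegrable u' volume a b)
    (hftc : ∀ s ∈ Icc a b, u s = u a + ∫ r in a..s, u' r)
    (hu' : ∀ᵐ r ∂volume.restrict (Ioc a b), u' r ≤ -k * (u r - c)) :
    ∀ s ∈ Icc a b, u s - c ≤ (u a - c) * exp (-k * (s - a)) := by
  set g : ℝ → ℝ := fun r => (u a - c) * exp (-k * (r - a))
  have hg : ∀ r, HasDerivAt g (-k * g r) r := fun r =>
    ((((hasDerivAt_id' r).sub_const a).const_mul (-k)).exp.const_mul (u a - c)).congr_deriv
      (by simp only [g]; ring)
  have hgint : ∀ s, IntervalIntegrable (fun r => k * g r) volume a s := fun s =>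
    Continuous.intervalIntegrable
      (continuous_const.mul (continuous_iff_continuousAt.2 fun r => (hg r).continuousAt)) _ _
  intro s hs
  have hints : IntervalIntegrable u' volume a s :=
    hint.mono_set (uIcc_subset_uIcc left_mem_uIcc (mem_uIcc_of_le hs.1 hs.2))
  suffices u s - c - g s ≤ 0 by simpa [g] using this
  refine le_of_ae_deriv_nonpos_above (u := fun r => u r - c - g r) (u' := fun r => u' r + k * g r)
    hs.1 (hints.add (hgint s)) (fun r hr => ?_) ?_ (by simp [g])
  · have hintr := hint.mono_set
      (uIcc_subset_uIcc left_mem_uIcc (mem_uIcc_of_le hr.1 (hr.2.trans hs.2)))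
    have hgr : ∫ x in a..r, k * g x = g a - g r := by
      rw [intervalIntegral.integral_eq_sub_of_hasDerivAt (f := -g)
        (fun x _ => by simpa using (hg x).neg) (hgint r), Pi.neg_apply, Pi.neg_apply]
      ring
    rw [intervalIntegral.integral_add hintr (hgint r), hgr, hftc r ⟨hr.1, hr.2.trans hs.2⟩]
    ring
  · filter_upwards [ae_restrict_of_ae_restrict_of_subset (Ioc_subset_Ioc_right hs.2) hu']
      with r hr hpos
    nlinarith

lemma le_add_of_ae_deriv_le_neg_mul_sub {k c : ℝ} (hk : 0 ≤ k) (hc : 0 ≤ c) (hua : 0 ≤ u a)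
    (hint : IntervalIntegrable u' volume a b)
    (hftc : ∀ s ∈ Icc a b, u s = u a + ∫ r in a..s, u' r)
    (hu' : ∀ᵐ r ∂volume.restrict (Ioc a b), u' r ≤ -k * (u r - c)) :
    ∀ s ∈ Icc a b, u s ≤ u a + c := by
  intro s hs
  have he : exp (-k * (s - a)) ≤ 1 := exp_le_one_iff.mpr (by nlinarith [hs.1])
  nlinarith [sub_le_mul_exp_of_ae_deriv_le hk hint hftc hu' s hs,
    mul_nonneg hua (sub_nonneg.mpr he), mul_nonneg hc (exp_pos (-k * (s - a))).le]

end Primitive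

lemma monotoneOn_Ici_of_hasDerivAt_nonneg {f f' : ℝ → ℝ} {a : ℝ}
    (hf : ∀ s, a ≤ s → HasDerivAt f (f' s) s) (hf' : ∀ s, a ≤ s → 0 ≤ f' s) :
    MonotoneOn f (Ici a) :=
  monotoneOn_of_hasDerivWithinAt_nonneg (convex_Ici a)
    (fun s hs => (hf s hs).continuousAt.continuousWithinAt)
    (fun s hs => (hf s (interior_subset hs)).hasDerivWithinAt)
    (fun s hs => hf' s (interior_subset hs))

lemma sub_le_div_of_deriv_le_mul_exp {f f' : ℝ → ℝ} {a b A k : ℝ} (hab : a ≤ b) (hk : 0 < k)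
    (hA : 0 ≤ A) (hf : ∀ s ∈ Icc a b, HasDerivAt f (f' s) s)
    (hf' : ∀ s ∈ Icc a b, f' s ≤ A * exp (-k * (s - a))) : f b - f a ≤ A / k := by
  set g : ℝ → ℝ := fun s => f s + A / k * exp (-k * (s - a))
  have hg : ∀ s ∈ Icc a b, HasDerivAt g (f' s - A * exp (-k * (s - a))) s := fun s hs =>
    HasDerivAt.congr_deriv
      ((hf s hs).add ((((hasDerivAt_id' s).sub_const a).const_mul (-k)).exp.const_mul (A / k)))
      (by field_simp; ring)
  have hanti : AntitoneOn g (Icc a b) :=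
    antitoneOn_of_hasDerivWithinAt_nonpos (convex_Icc a b)
      (fun s hs => (hg s hs).continuousAt.continuousWithinAt)
      (fun s hs => (hg s (interior_subset hs)).hasDerivWithinAt)
      (fun s hs => sub_nonpos.mpr (hf' s (interior_subset hs)))
  have hgb := hanti ⟨le_rfl, hab⟩ ⟨hab, le_rfl⟩ hab
  have : 0 ≤ A / k * exp (-k * (b - a)) := by positivity
  simp only [g, sub_self, mul_zero, exp_zero, mul_one] at hgb
  linarith

lemma sub_le_mul_div_of_hasDerivAt_deadzone {w V : ℝ → ℝ} {Γ ε k a b : ℝ} (hab : a ≤ b)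
    (hΓ : 0 ≤ Γ) (hε : 0 ≤ ε) (hk : 0 < k) (hVa : 0 ≤ V a)
    (hw : ∀ s ∈ Icc a b, HasDerivAt w (Γ * max (V s - ε) 0) s)
    (hV : ∀ s ∈ Icc a b, V s - ε ≤ (V a - ε) * exp (-k * (s - a))) :
    w b - w a ≤ Γ * V a / k := by
  refine sub_le_div_of_deriv_le_mul_exp hab hk (mul_nonneg hΓ hVa) hw fun s hs => ?_
  rw [mul_assoc]
  gcongr
  refine max_le ?_ (mul_nonneg hVa (exp_pos _).le)
  nlinarith [hV s hs, exp_pos (-k * (s - a))]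

lemma deadzone_state_le {C β t : ℝ} {w V V' : ℝ → ℝ} (hC : 0 < C) (hβ : 0 ≤ β) (hw0 : 0 ≤ w 0)
    (hw : MonotoneOn w (Icc 0 t)) (hV0 : 0 ≤ V 0) (hint : IntervalIntegrable V' volume 0 t)
    (hftc : ∀ s ∈ Icc 0 t, V s = V 0 + ∫ r in 0..s, V' r)
    (hV' : ∀ᵐ r ∂volume.restrict (Ioc 0 t), V' r ≤ -2 * C * V r + β / (1 + w r)) :
    ∀ s ∈ Icc 0 t, V s ≤ V 0 + β / (2 * C * (1 + w 0)) := by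
  have h2C : 2 * C * (β / (2 * C * (1 + w 0))) = β / (1 + w 0) := by
    have : 0 < 1 + w 0 := by linarith
    field_simp
  refine le_add_of_ae_deriv_le_neg_mul_sub (k := 2 * C) (by positivity) (by positivity) hV0 hint
    hftc ?_
  filter_upwards [hV', ae_restrict_mem measurableSet_Ioc] with r hr ⟨hr0, hrt⟩
  have : β / (1 + w r) ≤ β / (1 + w 0) := by
    gcongr
    exact hw ⟨le_rfl, hr0.le.trans hrt⟩ ⟨hr0.le, hrt⟩ hr0.le
  linarith

theorem deadzone_gain_le {C Γ ε β : ℝ} {w V V' : ℝ → ℝ} (hC : 0 < C) (hΓ : 0 ≤ Γ) (hε : 0 < ε)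
    (hβ : 0 ≤ β) (hw : ∀ s, 0 ≤ s → HasDerivAt w (Γ * max (V s - ε) 0) s) (hw0 : 0 ≤ w 0)
    (hV : ∀ s, 0 ≤ s → 0 ≤ V s) (hV'int : ∀ T, 0 ≤ T → IntervalIntegrable V' volume 0 T)
    (hVftc : ∀ s t, 0 ≤ s → s ≤ t → V t - V s = ∫ r in s..t, V' r)
    (hV' : ∀ᵐ s ∂volume.restrict (Ici 0), V' s ≤ -2 * C * V s + β / (1 + w s))
    {t : ℝ} (ht : 0 ≤ t) :
    w t ≤ w 0 + β / (2 * C * ε) + Γ / (2 * C) * (V 0 + β / (2 * C * (1 + w 0))) := by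
  have hmono : MonotoneOn w (Ici 0) :=
    monotoneOn_Ici_of_hasDerivAt_nonneg hw fun s _ => by positivity
  have hint : ∀ a ∈ Icc 0 t, IntervalIntegrable V' volume a t := fun a ha =>
    (hV'int t ht).mono_set (uIcc_subset_uIcc (mem_uIcc_of_le ha.1 ha.2) right_mem_uIcc)
  have hftc : ∀ a, 0 ≤ a → ∀ s ∈ Icc a t, V s = V a + ∫ r in a..s, V' r := fun a ha s hs => by
    linarith [hVftc a s ha hs.1]
  have hV'on : ∀ a, 0 ≤ a → ∀ᵐ r ∂volume.restrict (Ioc a t),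
      V' r ≤ -2 * C * V r + β / (1 + w r) ∧ r ∈ Ioc a t := fun a ha => by
    filter_upwards [ae_restrict_of_ae_restrict_of_subset (fun r hr => ha.trans hr.1.le) hV',
      ae_restrict_mem measurableSet_Ioc] with r hr hra using ⟨hr, hra⟩
  have hVle := deadzone_state_le hC hβ hw0 (hmono.mono Icc_subset_Ici_self) (hV 0 le_rfl)
    (hint 0 ⟨le_rfl, ht⟩) (hftc 0 le_rfl) (by filter_upwards [hV'on 0 le_rfl] with r h using h.1)
  obtain ⟨τ, hτ, hwτ, hwafter⟩ := exists_last_le_of_continuousOn ht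
    (fun s hs => (hw s hs.1).continuousAt.continuousWithinAt)
    (le_max_left (w 0) (β / (2 * C * ε) - 1))
  have hV'after : ∀ᵐ r ∂volume.restrict (Ioc τ t), V' r ≤ -(2 * C) * (V r - ε) := by
    filter_upwards [hV'on τ hτ.1] with r ⟨hr, hrτ⟩
    have hP : β / (2 * C * ε) < 1 + w r := by
      linarith [le_max_right (w 0) (β / (2 * C * ε) - 1), hwafter r hrτ]
    rw [div_lt_iff₀ (by positivity)] at hP
    have : β / (1 + w r) ≤ 2 * C * ε :=
      div_le_of_le_mul₀ (by linarith [le_max_left (w 0) (β / (2 * C * ε) - 1), hwafter r hrτ])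
        (by positivity) (by linarith)
    linarith
  have hgain : w t - w τ ≤ Γ * V τ / (2 * C) :=
    sub_le_mul_div_of_hasDerivAt_deadzone hτ.2 hΓ hε.le (by positivity) (hV τ hτ.1)
      (fun s hs => hw s (hτ.1.trans hs.1))
      (sub_le_mul_exp_of_ae_deriv_le (by positivity) (hint τ hτ) (hftc τ hτ.1) hV'after)
  have : Γ * V τ / (2 * C) ≤ Γ / (2 * C) * (V 0 + β / (2 * C * (1 + w 0))) := by
    rw [mul_div_right_comm]
    exact mul_le_mul_of_nonneg_left (hVle τ hτ) (by positivity)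
  have : max (w 0) (β / (2 * C * ε) - 1) ≤ w 0 + β / (2 * C * ε) :=
    max_le (le_add_of_nonneg_right (by positivity)) (by linarith)
  linarith

/-- Local absolute continuity of `V` is encoded by the fundamental theorem of calculus for a
locally integrable a.e. derivative `V'`. -/
theorem dads_gain_bound (C Γ ε a κ B : ℝ)
    (hC : 0 < C) (hΓ : 0 < Γ) (hε : 0 < ε) (ha : 0 < a) (hκ : 0 < κ) (hB : 0 ≤ B)
    (z : ℝ → ℝ) (V V' : ℝ → ℝ)
    (hz : ∀ t, 0 ≤ t → HasDerivAt z (Γ * Real.exp (-z t) * max (V t - ε) 0) t)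
    (hVnonneg : ∀ t, 0 ≤ t → 0 ≤ V t)
    (hV'int : ∀ T, 0 ≤ T → IntervalIntegrable V' volume 0 T)
    (hVftc : ∀ s t, 0 ≤ s → s ≤ t → V t - V s = ∫ r in s..t, V' r)
    (hV' : ∀ᵐ t ∂(volume.restrict (Set.Ici (0 : ℝ))),
      V' t ≤ -2 * C * V t + a * B / (min 1 κ * (1 + Real.exp (z t)))) :
    ∀ t, 0 ≤ t →
      z 0 ≤ z t ∧
      z t ≤ Real.log (Real.exp (z 0) + (Γ / (2 * C)) * V 0 +
        a * B * (2 * C * (1 + Real.exp (z 0)) + ε * Γ) /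
          (4 * C ^ 2 * ε * min 1 κ * (1 + Real.exp (z 0)))) := by
  intro t ht
  have hexpz : ∀ s, 0 ≤ s → HasDerivAt (fun x => exp (z x)) (Γ * max (V s - ε) 0) s :=
    fun s hs => (hz s hs).exp.congr_deriv (by rw [exp_neg]; field_simp)
  have hgain : exp (z t) ≤ _ := deadzone_gain_le (β := a * B / min 1 κ) hC hΓ.le hε
    (by positivity) hexpz (exp_pos _).le hVnonneg hV'int hVftc
    (by filter_upwards [hV'] with s hs; rwa [div_div]) ht
  refine ⟨monotoneOn_Ici_of_hasDerivAt_nonneg hz (fun s _ => by positivity) self_mem_Ici ht ht, ?_⟩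
  calc z t = log (exp (z t)) := (log_exp _).symm
    _ ≤ _ := log_le_log (exp_pos _) (hgain.trans_eq (by field_simp; ring))
end

section
/- Let p̄ > 0, let w : [0, 1] → ℝ be twice continuously differentiable with w(0) = w(1) = 0, let θ₁, δ : [0, 1] → ℝ be continuous, let y ∈ ℝ, and let K : [0, 1] → ℝ be continuous with |K(x)| ≤ |y| for all x ∈ [0, 1]. Then (1/p̄)·∫₀¹ w(x)·(p̄·w''(x) + θ₁(x)K(x) + δ(x)) dx ≤ −∫₀¹ w(x)² dx + (1/p̄²)·(∫₀¹ θ₁(x)² dx)·y² + (1/(p̄²(4π² − 5)))·∫₀¹ δ(x)² dx. -/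
/-!
Integrating by parts, the diffusion term contributes `-∫₀¹ w'²`. Young's inequality absorbs the
source terms `w θ₁ K / p̄` and `w δ / p̄` at the price of
`(1/4 + (4π² - 5)/4) ∫₀¹ w² = (π² - 1) ∫₀¹ w²`, and Wirtinger's inequality
`π² ∫₀¹ w² ≤ ∫₀¹ w'²` turns `-∫₀¹ w'² + (π² - 1) ∫₀¹ w²` into `-∫₀¹ w²`.

Wirtinger's inequality follows from the Picone-type identity
`(k w² cot (k x))' = w'² - k² w² - (w' - k w cot (k x))²`, integrated over `(0, 1)` with
`k = π`: the boundary terms vanish because `w / sin (π x)` stays bounded at the zeros of `w`.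
-/

open Real Filter Topology Set intervalIntegral

lemma tendsto_div_nhdsNE_of_hasDerivAt {f g : ℝ → ℝ} {f' g' c : ℝ} (hf : HasDerivAt f f' c)
    (hg : HasDerivAt g g' c) (hfc : f c = 0) (hgc : g c = 0) (hg' : g' ≠ 0) :
    Tendsto (fun x => f x / g x) (𝓝[≠] c) (𝓝 (f' / g')) := by
  refine ((hasDerivAt_iff_tendsto_slope.mp hf).div
    (hasDerivAt_iff_tendsto_slope.mp hg) hg').congr' ?_
  filter_upwards [self_mem_nhdsWithin] with x hx
  simp only [Pi.div_apply, slope_def_field, hfc, hgc, sub_zero]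
  exact div_div_div_cancel_right₀ (sub_ne_zero.mpr hx) _ _

lemma hasDerivAt_mul_sq_mul_cot {w : ℝ → ℝ} {w' k x : ℝ} (hw : HasDerivAt w w' x)
    (hx : sin (k * x) ≠ 0) :
    HasDerivAt (fun t => k * w t ^ 2 * cot (k * t))
      (w' ^ 2 - k ^ 2 * w x ^ 2 - (w' - k * w x * cot (k * x)) ^ 2) x := by
  have hlin : HasDerivAt (fun t => k * t) k x := by
    simpa using (hasDerivAt_id x).const_mul k
  simp only [cot_eq_cos_div_sin]
  refine (((hw.pow 2).const_mul k).mul (hlin.cos.div hlin.sin hx)).congr_deriv ?_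
  simp only [Pi.div_apply, Pi.pow_apply]
  field_simp
  ring

lemma continuousAt_mul_sq_mul_cot {w : ℝ → ℝ} {k c : ℝ} (hk : k ≠ 0)
    (hw : DifferentiableAt ℝ w c) (hwc : w c = 0) (hc : sin (k * c) = 0) :
    ContinuousAt (fun t => k * w t ^ 2 * cot (k * t)) c := by
  have hlin : HasDerivAt (fun t => k * t) k c := by
    simpa using (hasDerivAt_id c).const_mul k
  have hcos : cos (k * c) ≠ 0 := by
    intro h
    simpa [hc, h] using sin_sq_add_cos_sq (k * c)
  have hratio : Tendsto (fun t => w t / sin (k * t)) (𝓝[≠] c)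
      (𝓝 (deriv w c / (cos (k * c) * k))) :=
    tendsto_div_nhdsNE_of_hasDerivAt hw.hasDerivAt hlin.sin hwc hc (mul_ne_zero hcos hk)
  have hfactor : Tendsto (fun t => k * w t * cos (k * t)) (𝓝[≠] c) (𝓝 0) := by
    have : ContinuousAt (fun t => k * w t * cos (k * t)) c :=
      (continuousAt_const.mul hw.continuousAt).mul
        (continuous_cos.continuousAt.comp hlin.continuousAt)
    simpa [hwc] using this.tendsto.mono_left nhdsWithin_le_nhds
  rw [← continuousWithinAt_compl_self, ContinuousWithinAt]
  convert hratio.mul hfactor using 2 with t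
  · rw [cot_eq_cos_div_sin]; ring
  · simp [hwc]

theorem pi_sq_mul_integral_sq_le_integral_deriv_sq {w : ℝ → ℝ} (hw : ContDiff ℝ 1 w)
    (hw0 : w 0 = 0) (hw1 : w 1 = 0) :
    π ^ 2 * ∫ x in (0 : ℝ)..1, w x ^ 2 ≤ ∫ x in (0 : ℝ)..1, deriv w x ^ 2 := by
  have hwd : Differentiable ℝ w := hw.differentiable one_ne_zero
  have hsin : ∀ x ∈ Ioo (0 : ℝ) 1, sin (π * x) ≠ 0 := fun x hx =>
    (sin_pos_of_pos_of_lt_pi (by nlinarith [hx.1, pi_pos]) (by nlinarith [hx.2, pi_pos])).ne'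
  have hF : ContinuousOn (fun t => π * w t ^ 2 * cot (π * t)) (Icc 0 1) := by
    intro x hx
    rcases eq_endpoints_or_mem_Ioo_of_mem_Icc hx with rfl | rfl | hx
    · exact (continuousAt_mul_sq_mul_cot pi_ne_zero (hwd 0) hw0 (by simp)).continuousWithinAt
    · exact (continuousAt_mul_sq_mul_cot pi_ne_zero (hwd 1) hw1 (by simp)).continuousWithinAt
    · exact (hasDerivAt_mul_sq_mul_cot (hwd x).hasDerivAt (hsin x hx)).continuousAt
        |>.continuousWithinAt
  have hsq : Continuous fun x => π ^ 2 * w x ^ 2 := by fun_prop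
  have hdsq : Continuous fun x => deriv w x ^ 2 := (hw.continuous_deriv le_rfl).pow 2
  have hpicone := sub_le_integral_of_hasDeriv_right_of_le
    (φ := fun x => deriv w x ^ 2 - π ^ 2 * w x ^ 2) zero_le_one hF
    (fun x hx => (hasDerivAt_mul_sq_mul_cot (hwd x).hasDerivAt (hsin x hx)).hasDerivWithinAt)
    (hdsq.sub hsq).integrableOn_Icc
    (fun x _ => sub_le_self _ (sq_nonneg _))
  rw [integral_sub (hdsq.intervalIntegrable 0 1) (hsq.intervalIntegrable 0 1),
    integral_const_mul] at hpicone
  simp only [hw0, hw1, zero_pow two_ne_zero, mul_zero, zero_mul, sub_zero] at hpicone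
  linarith

theorem integral_mul_deriv_deriv_eq_neg_integral_deriv_sq {w : ℝ → ℝ} {a b : ℝ}
    (hw : ContDiff ℝ 2 w) (ha : w a = 0) (hb : w b = 0) :
    ∫ x in a..b, w x * deriv (deriv w) x = -∫ x in a..b, deriv w x ^ 2 := by
  have hw' : ContDiff ℝ 1 (deriv w) := hw.deriv' (n := 1)
  rw [integral_mul_deriv_eq_deriv_mul
    (fun x _ => (hw.differentiable two_ne_zero x).hasDerivAt)
    (fun x _ => (hw'.differentiable one_ne_zero x).hasDerivAt)
    ((hw.continuous_deriv one_le_two).intervalIntegrable a b)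
    ((hw'.continuous_deriv le_rfl).intervalIntegrable a b), ha, hb]
  simp [sq]

lemma mul_le_mul_sq_div_four_add_sq_div {m : ℝ} (hm : 0 < m) (a b : ℝ) :
    a * b ≤ m * a ^ 2 / 4 + b ^ 2 / m := by
  rw [div_add_div _ _ four_ne_zero hm.ne', le_div_iff₀ (by positivity)]
  nlinarith [sq_nonneg (m * a - 2 * b)]

lemma mul_add_div_le_of_abs_le {p m θ k d y v : ℝ} (hm : 0 < m) (hk : |k| ≤ |y|) :
    v * (θ * k + d) / p ≤
      (1 + m) / 4 * v ^ 2 + y ^ 2 / p ^ 2 * θ ^ 2 + 1 / (p ^ 2 * m) * d ^ 2 := by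
  have hθk := mul_le_mul_sq_div_four_add_sq_div one_pos v (θ * k / p)
  have hd := mul_le_mul_sq_div_four_add_sq_div hm v (d / p)
  have hky : k ^ 2 * (θ ^ 2 / p ^ 2) ≤ y ^ 2 * (θ ^ 2 / p ^ 2) :=
    mul_le_mul_of_nonneg_right (sq_le_sq.mpr hk) (by positivity)
  linear_combination hθk + hd + hky

theorem integral_mul_add_div_le_of_abs_le {p m y a b : ℝ} {v θ k d : ℝ → ℝ} (hm : 0 < m)
    (hab : a ≤ b) (hv : Continuous v) (hθ : Continuous θ) (hk : Continuous k)
    (hd : Continuous d) (hky : ∀ x ∈ Icc a b, |k x| ≤ |y|) :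
    ∫ x in a..b, v x * (θ x * k x + d x) / p ≤
      (1 + m) / 4 * (∫ x in a..b, v x ^ 2) + y ^ 2 / p ^ 2 * (∫ x in a..b, θ x ^ 2)
        + 1 / (p ^ 2 * m) * ∫ x in a..b, d x ^ 2 := by
  calc _ ≤ ∫ x in a..b, ((1 + m) / 4 * v x ^ 2 + y ^ 2 / p ^ 2 * θ x ^ 2
        + 1 / (p ^ 2 * m) * d x ^ 2) :=
        integral_mono_on hab (Continuous.intervalIntegrable (by fun_prop) a b)
          (Continuous.intervalIntegrable (by fun_prop) a b)
          fun x hx => mul_add_div_le_of_abs_le hm (hky x hx)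
    _ = _ := by
      rw [integral_add, integral_add, integral_const_mul,
        integral_const_mul, integral_const_mul]
      all_goals exact Continuous.intervalIntegrable (by fun_prop) a b

/-- The dissipation estimate (4.4) for the heat PDE (Case A): for `p̄ > 0`, a `C²`
function `w` with `w(0) = w(1) = 0`, continuous `θ₁, δ`, `y ∈ ℝ` and continuous `K`
with `|K(x)| ≤ |y|` on `[0,1]`,
`(1/p̄)∫₀¹ w(p̄w'' + θ₁K + δ) ≤ −∫₀¹ w² + (1/p̄²)(∫₀¹ θ₁²)y² + (1/(p̄²(4π² − 5)))∫₀¹ δ²`. -/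
theorem heat_dissipation_estimate (pbar : ℝ) (hpbar : 0 < pbar)
    (w θ₁ δ K : ℝ → ℝ) (y : ℝ)
    (hw : ContDiff ℝ 2 w) (hw0 : w 0 = 0) (hw1 : w 1 = 0)
    (hθ₁ : Continuous θ₁) (hδ : Continuous δ) (hK : Continuous K)
    (hKy : ∀ x ∈ Set.Icc (0 : ℝ) 1, |K x| ≤ |y|) :
    (1 / pbar) * ∫ x in (0 : ℝ)..1, w x * (pbar * deriv (deriv w) x + θ₁ x * K x + δ x) ≤
      -(∫ x in (0 : ℝ)..1, (w x) ^ 2) +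
        (1 / pbar ^ 2) * (∫ x in (0 : ℝ)..1, (θ₁ x) ^ 2) * y ^ 2 +
        (1 / (pbar ^ 2 * (4 * Real.pi ^ 2 - 5))) * ∫ x in (0 : ℝ)..1, (δ x) ^ 2 := by
  have hm : 0 < 4 * π ^ 2 - 5 := by nlinarith [pi_gt_three]
  have hw'' : Continuous (deriv (deriv w)) := (hw.deriv' (n := 1)).continuous_deriv le_rfl
  have hsplit :
      (1 / pbar) * ∫ x in (0 : ℝ)..1, w x * (pbar * deriv (deriv w) x + θ₁ x * K x + δ x) =
        (∫ x in (0 : ℝ)..1, w x * deriv (deriv w) x) +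
          ∫ x in (0 : ℝ)..1, w x * (θ₁ x * K x + δ x) / pbar := by
    rw [← integral_const_mul, ← integral_add]
    · refine integral_congr fun x _ => ?_
      field_simp
      ring
    all_goals exact Continuous.intervalIntegrable (by fun_prop) 0 1
  rw [hsplit, integral_mul_deriv_deriv_eq_neg_integral_deriv_sq hw hw0 hw1]
  have hsource := integral_mul_add_div_le_of_abs_le (p := pbar) hm zero_le_one hw.continuous
    hθ₁ hK hδ hKy
  have hwirtinger := pi_sq_mul_integral_sq_le_integral_deriv_sq (hw.of_le one_le_two) hw0 hw1
  linear_combination hsource + hwirtinger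
end

section
/- Let p̄ > 0 and θ₁, θ₂ ∈ ℝ with θ₁θ₂ = 6(1 + 2p̄). Define y(t) := (θ₂/6)e^t, w(t, x) := e^t·x(x − 1), K(x, η) := ((x² − x − 2p̄)/(1 + 2p̄))·η, and L(v) := −∫₀¹ v(x) dx. Then: (i) |K(x, η)| ≤ |η| for all x ∈ [0, 1] and η ∈ ℝ; (ii) |L(v)| ≤ (∫₀¹ v(x)² dx)^{1/2} for every square-integrable v : [0, 1] → ℝ; (iii) for all t ≥ 0 and x ∈ [0, 1]: ∂w/∂t(t, x) = p̄·∂²w/∂x²(t, x) + θ₁·K(x, y(t)), w(t, 0) = w(t, 1) = 0, and y'(t) = θ₂·L(w(t, ·)). -/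
open MeasureTheory

/-!
The kernel bound is `|x² − x − 2p̄| ≤ 1 + 2p̄` on `[0, 1]`, and the bound on `L` is Cauchy–Schwarz
on the probability space `[0, 1]`, i.e. nonnegativity of the variance. For the PDE, `w` solves
`w_t = p̄ w_xx + (x² − x − 2p̄) e^t`, and `θ₁ θ₂ = 6(1 + 2p̄)` makes `θ₁ K(x, y(t))` exactly this
forcing term; the ODE holds since `∫₀¹ x(x − 1) dx = −1/6`.
-/

open ProbabilityTheory in
theorem sq_integral_le_integral_sq {Ω : Type*} [MeasurableSpace Ω] {μ : Measure Ω}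
    [IsProbabilityMeasure μ] {v : Ω → ℝ} (hv : MemLp v 2 μ) :
    (∫ ω, v ω ∂μ) ^ 2 ≤ ∫ ω, v ω ^ 2 ∂μ := by
  have hvar := variance_nonneg v μ
  rw [variance_eq_sub hv] at hvar
  simpa using hvar

instance isProbabilityMeasure_restrict_Icc_zero_one :
    IsProbabilityMeasure (volume.restrict (Set.Icc (0 : ℝ) 1)) :=
  ⟨by simp⟩

theorem abs_integral_zero_one_le_sqrt_integral_sq {v : ℝ → ℝ}
    (hv : MemLp v 2 (volume.restrict (Set.Icc (0 : ℝ) 1))) :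
    |∫ x in (0 : ℝ)..1, v x| ≤ Real.sqrt (∫ x in (0 : ℝ)..1, v x ^ 2) := by
  simp only [intervalIntegral.integral_of_le zero_le_one, ← integral_Icc_eq_integral_Ioc]
  rw [← Real.sqrt_sq_eq_abs]
  exact Real.sqrt_le_sqrt (sq_integral_le_integral_sq hv)

theorem abs_sq_sub_self_sub_le {x p : ℝ} (hx : x ∈ Set.Icc (0 : ℝ) 1) (hp : 0 ≤ p) :
    |x ^ 2 - x - 2 * p| ≤ 1 + 2 * p := by
  obtain ⟨hx0, hx1⟩ := hx
  rw [abs_le]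
  constructor <;> nlinarith

theorem deriv_deriv_const_mul_mul_sub_one (c x : ℝ) :
    deriv (deriv fun x : ℝ => c * (x * (x - 1))) x = 2 * c := by
  have hfirst : deriv (fun x : ℝ => c * (x * (x - 1))) = fun x => c * (2 * x - 1) := by
    ext y
    exact ((((hasDerivAt_id' y).mul ((hasDerivAt_id' y).sub_const 1)).const_mul c).congr_deriv
      (by ring)).deriv
  rw [hfirst]
  exact (((((hasDerivAt_id' x).const_mul 2).sub_const 1).const_mul c).congr_deriv (by ring)).deriv

theorem integral_mul_sub_one_zero_one : ∫ x in (0 : ℝ)..1, x * (x - 1) = -1 / 6 := by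
  norm_num [mul_sub, ← sq, integral_pow, integral_id]

/-- The open-loop instability example for Case A (heat PDE): with
`θ₁θ₂ = 6(1 + 2p̄)`, `y(t) = (θ₂/6)e^t`, `w(t,x) = e^t x(x−1)`,
`K(x,η) = ((x² − x − 2p̄)/(1 + 2p̄))η` and `L(v) = −∫₀¹ v`, the structural bounds (4.2)
hold and `(y, w)` is an exponentially growing solution of the open-loop system (4.1). -/
theorem heat_open_loop_instability_example (pbar θ₁ θ₂ : ℝ) (hpbar : 0 < pbar)
    (hθ : θ₁ * θ₂ = 6 * (1 + 2 * pbar))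
    (y : ℝ → ℝ) (w : ℝ → ℝ → ℝ) (K : ℝ → ℝ → ℝ) (L : (ℝ → ℝ) → ℝ)
    (hy : ∀ t, y t = (θ₂ / 6) * Real.exp t)
    (hw : ∀ t x, w t x = Real.exp t * (x * (x - 1)))
    (hK : ∀ x η, K x η = ((x ^ 2 - x - 2 * pbar) / (1 + 2 * pbar)) * η)
    (hL : ∀ v, L v = -∫ x in (0 : ℝ)..1, v x) :
    (∀ x ∈ Set.Icc (0 : ℝ) 1, ∀ η : ℝ, |K x η| ≤ |η|) ∧
    (∀ v : ℝ → ℝ, MemLp v 2 (volume.restrict (Set.Icc (0 : ℝ) 1)) →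
      |L v| ≤ Real.sqrt (∫ x in (0 : ℝ)..1, (v x) ^ 2)) ∧
    (∀ t, 0 ≤ t → ∀ x ∈ Set.Icc (0 : ℝ) 1,
      deriv (fun s => w s x) t = pbar * deriv (deriv (w t)) x + θ₁ * K x (y t) ∧
      w t 0 = 0 ∧ w t 1 = 0 ∧
      deriv y t = θ₂ * L (w t)) := by
  have hden : 0 < 1 + 2 * pbar := by linarith
  have hwt : ∀ t, w t = fun x => Real.exp t * (x * (x - 1)) := fun t => funext (hw t)
  refine ⟨fun x hx η => ?_, fun v hv => ?_, fun t _ x _ => ⟨?_, by simp [hw], by simp [hw], ?_⟩⟩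
  · rw [hK, abs_mul, abs_div, abs_of_pos hden]
    exact mul_le_of_le_one_left (abs_nonneg η)
      ((div_le_one hden).2 (abs_sq_sub_self_sub_le hx hpbar.le))
  · rw [hL, abs_neg]
    exact abs_integral_zero_one_le_sqrt_integral_sq hv
  · have hforcing : θ₁ * K x (y t) = (x ^ 2 - x - 2 * pbar) * Real.exp t :=
      calc θ₁ * K x (y t)
          = (x ^ 2 - x - 2 * pbar) * Real.exp t * (θ₁ * θ₂ / (6 * (1 + 2 * pbar))) := by
            rw [hK, hy]; field_simp
        _ = (x ^ 2 - x - 2 * pbar) * Real.exp t := by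
            rw [hθ, div_self (by positivity), mul_one]
    rw [hforcing]
    simp only [hw, hwt, Real.deriv_exp, deriv_mul_const_field', deriv_deriv_const_mul_mul_sub_one]
    ring
  · simp only [funext hy, hL, hwt, deriv_const_mul_field', Real.deriv_exp,
      intervalIntegral.integral_const_mul, integral_mul_sub_one_zero_one]
    ring
end

section
/- Let c > 0, τ₂ ≥ 0, let w : [0, 1] → ℝ be continuously differentiable, let y ∈ ℝ with |w(0)| ≤ τ₂|y|, let θ : [0, 1] → ℝ and δ : [0, 1] → ℝ be continuous, and let K : [0, 1] → ℝ be continuous with |K(x)| ≤ |y| for all x ∈ [0, 1]. Then (4e/c)·∫₀¹ e^{−x}·w(x)·(−c·w'(x) + θ(x)K(x) + δ(x)) dx ≤ −∫₀¹ w(x)² dx + 2e·τ₂²·y² + (8e²/c²)·(∫₀¹ θ(x)² dx)·y² + (8e²/c²)·∫₀¹ δ(x)² dx. -/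
/-!
Split the integrand into the transport part `-c e^{-x} w w'` and the forcing part
`e^{-x} w (θ K + δ)`. Since `2 e^{-x} w w' = (e^{-x} w²)' + e^{-x} w²`, the transport part
contributes `-2 w(1)² + 2e w(0)² - 2e ∫ e^{-x} w²`, and `e · e^{-x} ≥ 1` on `[0, 1]` turns the
last term into `-2 ∫ w²`. Young's inequality `2uv ≤ u² + v²`, applied separately to `θ K` and
`δ`, bounds the forcing part by `∫ w²` plus the `θ`- and `δ`-terms, leaving `-∫ w²` in total.
-/

open Real intervalIntegral

theorem two_mul_integral_exp_neg_mul_mul_deriv {w : ℝ → ℝ} (hw : ContDiff ℝ 1 w) (a b : ℝ) :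
    2 * ∫ x in a..b, exp (-x) * w x * deriv w x =
      exp (-b) * w b ^ 2 - exp (-a) * w a ^ 2 + ∫ x in a..b, exp (-x) * w x ^ 2 := by
  have hwd : Differentiable ℝ w := hw.differentiable one_ne_zero
  have hw' : Continuous (deriv w) := hw.continuous_deriv le_rfl
  have hderiv : ∀ x ∈ Set.uIcc a b, HasDerivAt (fun t => exp (-t) * w t ^ 2)
      (2 * (exp (-x) * w x * deriv w x) - exp (-x) * w x ^ 2) x := by
    intro x _
    have hexp : HasDerivAt (fun t => exp (-t)) (-exp (-x)) x := by
      simpa using (hasDerivAt_neg x).exp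
    have hsq : HasDerivAt (fun t => w t ^ 2) (2 * w x * deriv w x) x := by
      simpa [mul_comm] using (hwd x).hasDerivAt.fun_pow 2
    exact (hexp.fun_mul hsq).congr_deriv (by ring)
  have hftc := integral_eq_sub_of_hasDerivAt hderiv
    (Continuous.intervalIntegrable (by fun_prop) a b)
  rw [integral_sub, integral_const_mul] at hftc
  · linarith
  all_goals exact Continuous.intervalIntegrable (by fun_prop) a b

theorem integral_sq_le_exp_mul_integral_exp_neg_mul_sq {w : ℝ → ℝ} (hw : Continuous w)
    {a b : ℝ} (hab : a ≤ b) :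
    ∫ x in a..b, w x ^ 2 ≤ exp b * ∫ x in a..b, exp (-x) * w x ^ 2 := by
  rw [← integral_const_mul]
  refine integral_mono_on hab ?_ ?_ fun x hx => ?_
  · exact Continuous.intervalIntegrable (by fun_prop) a b
  · exact Continuous.intervalIntegrable (by fun_prop) a b
  have hweight : 1 ≤ exp b * exp (-x) := by
    rw [← exp_add]
    exact one_le_exp (by linarith [hx.2])
  linear_combination w x ^ 2 * hweight

theorem mul_mul_mul_add_le_sq_add (b s u θ k d y : ℝ) (hs : |s| ≤ 1) (hk : |k| ≤ |y|) :
    b * (s * u * (θ * k + d)) ≤ u ^ 2 + b ^ 2 / 2 * (θ ^ 2 * y ^ 2 + d ^ 2) := by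
  have hs₂ : s ^ 2 ≤ 1 := by
    rw [← sq_abs]
    exact pow_le_one₀ (abs_nonneg s) hs
  have hk₂ : k ^ 2 ≤ y ^ 2 := sq_le_sq.mpr hk
  have hθk : (b * s * θ * k) ^ 2 ≤ b ^ 2 * θ ^ 2 * y ^ 2 := by
    calc (b * s * θ * k) ^ 2 = (b ^ 2 * θ ^ 2) * (s ^ 2 * k ^ 2) := by ring
      _ ≤ (b ^ 2 * θ ^ 2) * (1 * y ^ 2) := by gcongr
      _ = b ^ 2 * θ ^ 2 * y ^ 2 := by ring
  have hd : (b * s * d) ^ 2 ≤ b ^ 2 * d ^ 2 := by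
    calc (b * s * d) ^ 2 = (b ^ 2 * d ^ 2) * s ^ 2 := by ring
      _ ≤ (b ^ 2 * d ^ 2) * 1 := by gcongr
      _ = b ^ 2 * d ^ 2 := mul_one _
  linear_combination (two_mul_le_add_sq u (b * s * θ * k) + two_mul_le_add_sq u (b * s * d)
    + hθk + hd) / 2

theorem mul_integral_exp_neg_mul_mul_add_le {w θ δ K : ℝ → ℝ} {a b : ℝ} (ha : 0 ≤ a)
    (hab : a ≤ b) (β y : ℝ) (hw : Continuous w) (hθ : Continuous θ) (hδ : Continuous δ)
    (hK : Continuous K) (hKy : ∀ x ∈ Set.Icc a b, |K x| ≤ |y|) :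
    β * ∫ x in a..b, exp (-x) * w x * (θ x * K x + δ x) ≤
      (∫ x in a..b, w x ^ 2) +
        β ^ 2 / 2 * ((∫ x in a..b, θ x ^ 2) * y ^ 2 + ∫ x in a..b, δ x ^ 2) := by
  have hbound : β * ∫ x in a..b, exp (-x) * w x * (θ x * K x + δ x) ≤
      ∫ x in a..b, w x ^ 2 + β ^ 2 / 2 * (θ x ^ 2 * y ^ 2 + δ x ^ 2) := by
    have hexp : ∀ x ∈ Set.Icc a b, |exp (-x)| ≤ 1 := fun x hx => by
      rw [abs_of_pos (exp_pos _), exp_le_one_iff, neg_nonpos]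
      exact ha.trans hx.1
    rw [← integral_const_mul]
    refine integral_mono_on hab ?_ ?_ fun x hx =>
      mul_mul_mul_add_le_sq_add _ _ _ _ _ _ _ (hexp x hx) (hKy x hx)
    all_goals exact Continuous.intervalIntegrable (by fun_prop) a b
  rwa [integral_add, integral_const_mul, integral_add, integral_mul_const] at hbound
  all_goals exact Continuous.intervalIntegrable (by fun_prop) a b

theorem transport_dissipation_estimate_general (c τ₂ : ℝ) (hc : 0 < c)
    (w θ δ K : ℝ → ℝ) (y : ℝ)
    (hw : ContDiff ℝ 1 w) (hw0 : |w 0| ≤ τ₂ * |y|)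
    (hθ : Continuous θ) (hδ : Continuous δ) (hK : Continuous K)
    (hKy : ∀ x ∈ Set.Icc (0 : ℝ) 1, |K x| ≤ |y|) :
    (4 * Real.exp 1 / c) *
        ∫ x in (0 : ℝ)..1, Real.exp (-x) * w x * (-c * deriv w x + θ x * K x + δ x) ≤
      -(∫ x in (0 : ℝ)..1, (w x) ^ 2) + 2 * Real.exp 1 * τ₂ ^ 2 * y ^ 2 +
        (8 * (Real.exp 1) ^ 2 / c ^ 2) * (∫ x in (0 : ℝ)..1, (θ x) ^ 2) * y ^ 2 +
        (8 * (Real.exp 1) ^ 2 / c ^ 2) * ∫ x in (0 : ℝ)..1, (δ x) ^ 2 := by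
  have hw' : Continuous (deriv w) := hw.continuous_deriv le_rfl
  have hwc : Continuous w := hw.continuous
  have hsplit : ∫ x in (0 : ℝ)..1, exp (-x) * w x * (-c * deriv w x + θ x * K x + δ x) =
      -c * (∫ x in (0 : ℝ)..1, exp (-x) * w x * deriv w x) +
        ∫ x in (0 : ℝ)..1, exp (-x) * w x * (θ x * K x + δ x) := by
    rw [← integral_const_mul, ← integral_add]
    · exact integral_congr fun x _ => by ring
    all_goals exact Continuous.intervalIntegrable (by fun_prop) 0 1
  have hcancel (I : ℝ) : 4 * exp 1 / c * (-c * I) = -2 * exp 1 * (2 * I) := by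
    field_simp
    ring
  have htransport := two_mul_integral_exp_neg_mul_mul_deriv hw 0 1
  have hweight := integral_sq_le_exp_mul_integral_exp_neg_mul_sq hwc zero_le_one
  have hforcing := mul_integral_exp_neg_mul_mul_add_le le_rfl zero_le_one (4 * exp 1 / c) y
    hwc hθ hδ hK hKy
  have hboundary : w 0 ^ 2 ≤ τ₂ ^ 2 * y ^ 2 := by
    rw [← sq_abs (w 0), ← sq_abs y, ← mul_pow]
    exact pow_le_pow_left₀ (abs_nonneg _) hw0 2
  have he : exp 1 * exp (-1) = 1 := by rw [← exp_add]; norm_num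
  rw [hsplit, mul_add, hcancel, htransport, neg_zero, exp_zero, one_mul]
  linear_combination 2 * exp 1 * hboundary + 2 * hweight + hforcing - 2 * w 1 ^ 2 * he
    + 2 * sq_nonneg (w 1)

/-- The dissipation estimate for the transport PDE (Case B): for `c > 0`, `τ₂ ≥ 0`, a `C¹`
function `w` with `|w(0)| ≤ τ₂|y|`, continuous `θ, δ` and continuous `K` with `|K(x)| ≤ |y|`
on `[0,1]`,
`(4e/c)∫₀¹ e^{−x}w(−cw' + θK + δ) ≤ −∫₀¹ w² + 2eτ₂²y² + (8e²/c²)(∫₀¹ θ²)y² + (8e²/c²)∫₀¹ δ²`. -/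
theorem transport_dissipation_estimate (c τ₂ : ℝ) (hc : 0 < c) (hτ₂ : 0 ≤ τ₂)
    (w θ δ K : ℝ → ℝ) (y : ℝ)
    (hw : ContDiff ℝ 1 w) (hw0 : |w 0| ≤ τ₂ * |y|)
    (hθ : Continuous θ) (hδ : Continuous δ) (hK : Continuous K)
    (hKy : ∀ x ∈ Set.Icc (0 : ℝ) 1, |K x| ≤ |y|) :
    (4 * Real.exp 1 / c) *
        ∫ x in (0 : ℝ)..1, Real.exp (-x) * w x * (-c * deriv w x + θ x * K x + δ x) ≤
      -(∫ x in (0 : ℝ)..1, (w x) ^ 2) + 2 * Real.exp 1 * τ₂ ^ 2 * y ^ 2 +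
        (8 * (Real.exp 1) ^ 2 / c ^ 2) * (∫ x in (0 : ℝ)..1, (θ x) ^ 2) * y ^ 2 +
        (8 * (Real.exp 1) ^ 2 / c ^ 2) * ∫ x in (0 : ℝ)..1, (δ x) ^ 2 :=
  transport_dissipation_estimate_general c τ₂ hc w θ δ K y hw hw0 hθ hδ hK hKy
end

section
/- Let c > 0 and θ₁, θ₂ > 0 with θ₁θ₂ ≥ 2(1 + c). Define y(t) := (θ₂/2)e^t, w(t, x) := e^t·x, K₁(x, η) := (2(x + c)/(θ₁θ₂))·η, and L(v) := ∫₀¹ v(x) dx. Then: (i) |K₁(x, η)| ≤ |η| for all x ∈ [0, 1] and η ∈ ℝ; (ii) |L(v)| ≤ (∫₀¹ v(x)² dx)^{1/2} for every square-integrable v : [0, 1] → ℝ; (iii) for all t ≥ 0 and x ∈ [0, 1]: ∂w/∂t(t, x) + c·∂w/∂x(t, x) = θ₁·K₁(x, y(t)), w(t, 0) = 0, and y'(t) = θ₂·L(w(t, ·)). -/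
open MeasureTheory

/-- The open-loop instability example for Case B (transport PDE): with
`θ₁θ₂ ≥ 2(1 + c)`, `y(t) = (θ₂/2)e^t`, `w(t,x) = e^t x`,
`K₁(x,η) = (2(x + c)/(θ₁θ₂))η` and `L(v) = ∫₀¹ v`, the structural bounds (4.7) hold and
`(y, w)` is an exponentially growing solution of the open-loop system (4.6). -/
theorem transport_open_loop_instability_example (c θ₁ θ₂ : ℝ)
    (hc : 0 < c) (hθ₁ : 0 < θ₁) (hθ₂ : 0 < θ₂) (hθ : 2 * (1 + c) ≤ θ₁ * θ₂)
    (y : ℝ → ℝ) (w : ℝ → ℝ → ℝ) (K₁ : ℝ → ℝ → ℝ) (L : (ℝ → ℝ) → ℝ)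
    (hy : ∀ t, y t = (θ₂ / 2) * Real.exp t)
    (hw : ∀ t x, w t x = Real.exp t * x)
    (hK₁ : ∀ x η, K₁ x η = (2 * (x + c) / (θ₁ * θ₂)) * η)
    (hL : ∀ v, L v = ∫ x in (0 : ℝ)..1, v x) :
    (∀ x ∈ Set.Icc (0 : ℝ) 1, ∀ η : ℝ, |K₁ x η| ≤ |η|) ∧
    (∀ v : ℝ → ℝ, MemLp v 2 (volume.restrict (Set.Icc (0 : ℝ) 1)) →
      |L v| ≤ Real.sqrt (∫ x in (0 : ℝ)..1, (v x) ^ 2)) ∧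
    (∀ t, 0 ≤ t → ∀ x ∈ Set.Icc (0 : ℝ) 1,
      deriv (fun s => w s x) t + c * deriv (w t) x = θ₁ * K₁ x (y t) ∧
      w t 0 = 0 ∧
      deriv y t = θ₂ * L (w t)) := by
  have hθθ : 0 < θ₁ * θ₂ := mul_pos hθ₁ hθ₂
  refine ⟨?_, ?_, ?_⟩
  · -- (i)
    intro x hx η
    rw [hK₁, abs_mul]
    have h1 : 0 ≤ 2 * (x + c) / (θ₁ * θ₂) := by exact div_nonneg (by nlinarith [hx.1]) hθθ.le
    have h2 : 2 * (x + c) / (θ₁ * θ₂) ≤ 1 := by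
      rw [div_le_one hθθ]
      nlinarith [hx.2]
    calc |2 * (x + c) / (θ₁ * θ₂)| * |η| = (2 * (x + c) / (θ₁ * θ₂)) * |η| := by
          rw [abs_of_nonneg h1]
      _ ≤ 1 * |η| := by
          exact mul_le_mul_of_nonneg_right h2 (abs_nonneg η)
      _ = |η| := one_mul _
  · -- (ii) Cauchy–Schwarz
    intro v hv
    set μ := volume.restrict (Set.Icc (0 : ℝ) 1) with hμ
    have hpq : Real.HolderConjugate 2 2 := by
      constructor <;> norm_num
    have hone : MemLp (fun _ : ℝ => (1 : ℝ)) (ENNReal.ofReal 2) μ := by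
      have : ENNReal.ofReal 2 = 2 := by norm_num
      rw [this]
      exact memLp_const _
    have hv2 : MemLp v (ENNReal.ofReal 2) μ := by
      have : ENNReal.ofReal 2 = 2 := by norm_num
      rw [this]; exact hv
    have hCS := MeasureTheory.integral_mul_norm_le_Lp_mul_Lq hpq hv2 hone (μ := μ)
    have hμIcc : μ Set.univ = 1 := by
      rw [hμ, Measure.restrict_apply MeasurableSet.univ, Set.univ_inter,
        Real.volume_Icc]
      norm_num
    have hι : (∫ x in (0:ℝ)..1, v x) = ∫ a, v a ∂μ := by
      rw [intervalIntegral.integral_of_le (by norm_num : (0:ℝ) ≤ 1), hμ,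
        ← MeasureTheory.integral_Icc_eq_integral_Ioc]
    have hι2 : (∫ x in (0:ℝ)..1, (v x) ^ 2) = ∫ a, (v a) ^ 2 ∂μ := by
      rw [intervalIntegral.integral_of_le (by norm_num : (0:ℝ) ≤ 1), hμ,
        ← MeasureTheory.integral_Icc_eq_integral_Ioc]
    have hsq : (∫ a, ‖v a‖ ^ (2:ℝ) ∂μ) = ∫ a, (v a) ^ 2 ∂μ := by
      refine integral_congr_ae (Filter.Eventually.of_forall fun a => ?_)
      simp [Real.rpow_two, sq_abs]
    have hone_int : (∫ a, ‖(1:ℝ)‖ ^ (2:ℝ) ∂μ) = 1 := by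
      simp [Measure.real, hμIcc]
    rw [hL, hι, hι2]
    have habs : |∫ a, v a ∂μ| ≤ ∫ a, ‖v a‖ ∂μ := by
      simpa using norm_integral_le_integral_norm (μ := μ) v
    have : (∫ a, ‖v a‖ * ‖(1:ℝ)‖ ∂μ) = ∫ a, ‖v a‖ ∂μ := by simp
    rw [this, hone_int] at hCS
    have hCS' : (∫ a, ‖v a‖ ∂μ) ≤ (∫ a, ‖v a‖ ^ (2:ℝ) ∂μ) ^ (1/2 : ℝ) := by
      simpa using hCS
    rw [hsq] at hCS'
    calc |∫ a, v a ∂μ| ≤ ∫ a, ‖v a‖ ∂μ := habs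
      _ ≤ (∫ a, (v a) ^ 2 ∂μ) ^ (1/2 : ℝ) := hCS'
      _ = Real.sqrt (∫ a, (v a) ^ 2 ∂μ) := by
          rw [Real.sqrt_eq_rpow]
  · -- (iii)
    intro t ht x hx
    have hwt : w t = fun z => Real.exp t * z := funext fun z => hw t z
    have hws : (fun s => w s x) = fun s => Real.exp s * x := funext fun s => hw s x
    have hyf : y = fun t => (θ₂ / 2) * Real.exp t := funext hy
    have hd1 : deriv (fun s => w s x) t = Real.exp t * x := by
      rw [hws]
      exact ((Real.hasDerivAt_exp t).mul_const x).deriv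
    have hd2 : deriv (w t) x = Real.exp t := by
      rw [hwt]
      simpa using ((hasDerivAt_id x).const_mul (Real.exp t)).deriv
    refine ⟨?_, ?_, ?_⟩
    · rw [hd1, hd2, hK₁, hy]
      field_simp
    · rw [hw]; ring
    · have hdy : deriv y t = (θ₂ / 2) * Real.exp t := by
        rw [hyf]
        exact ((Real.hasDerivAt_exp t).const_mul (θ₂/2)).deriv
      rw [hdy, hL]
      have : (∫ x in (0:ℝ)..1, w t x) = Real.exp t * (1/2) := by
        simp_rw [hw]
        rw [intervalIntegral.integral_const_mul, integral_id]
        norm_num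
      rw [this]; ring
end

section
/- Let c, σ > 0, let v : [0, 1] → ℝ be continuously differentiable with v(0) = v(1) = 0, and let φ : [0, 1] → ℝ be continuous. Define Φ := ((c² + 1)/σ)·∫₀¹ (v'(x))² dx + (1/σ)·∫₀¹ φ(x)² dx + (1/(σc²))·∫₀¹ (φ(x) + σv(x))² dx. Then (1/σ)·(∫₀¹ (v'(x))² dx + ∫₀¹ φ(x)² dx) ≤ Φ ≤ (1/σ)·max( c² + 1 + 2σ²/(c²π²), 1 + 2/c² )·(∫₀¹ (v'(x))² dx + ∫₀¹ φ(x)² dx). -/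
/-!
The lower bound only drops the nonnegative terms `(c²/σ)∫(v')²` and `(1/(σc²))∫(φ + σv)²`.
For the upper bound, `∫(φ + σv)² ≤ 2∫φ² + 2σ²∫v²`, and Wirtinger's inequality `π²∫v² ≤ ∫(v')²`
turns the last term into `(2σ²/π²)∫(v')²`.

Wirtinger's inequality is proved by a Riccati substitution: for `0 < l < π/(b - a)` the function
`h(x) = -l tan(l(x - (a + b)/2))` is finite on `[a, b]` and solves `h' = -l² - h²`, so
`(v')² = (v' - hv)² + l²v² + (hv²)'`. Integrating, the exact derivative drops out because `v`
vanishes at the endpoints, which gives `l²∫v² ≤ ∫(v')²`; then let `l → π/(b - a)`.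
-/

open Real Set Filter Topology intervalIntegral

theorem hasDerivAt_neg_mul_tan {l m x : ℝ} (hx : cos (l * (x - m)) ≠ 0) :
    HasDerivAt (fun y => -l * tan (l * (y - m))) (-l ^ 2 - (-l * tan (l * (x - m))) ^ 2) x := by
  have hinner : HasDerivAt (fun y => l * (y - m)) l x := by
    simpa using ((hasDerivAt_id x).sub_const m).const_mul l
  have hsec : 1 / cos (l * (x - m)) ^ 2 = 1 + tan (l * (x - m)) ^ 2 := by
    rw [← inv_one_add_tan_sq hx, one_div, inv_inv]
  refine (((hasDerivAt_tan hx).comp x hinner).const_mul (-l)).congr_deriv ?_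
  rw [hsec]
  ring

theorem sq_mul_integral_sq_le_integral_sq_of_riccati {a b l : ℝ} (hab : a ≤ b)
    {h v v' : ℝ → ℝ} (hh : ∀ x ∈ Icc a b, HasDerivAt h (-l ^ 2 - h x ^ 2) x)
    (hv : ∀ x ∈ Icc a b, HasDerivAt v (v' x) x) (hv' : ContinuousOn v' (Icc a b))
    (ha : v a = 0) (hb : v b = 0) :
    l ^ 2 * ∫ x in a..b, v x ^ 2 ≤ ∫ x in a..b, v' x ^ 2 := by
  have hhc : ContinuousOn h (Icc a b) := fun x hx => (hh x hx).continuousAt.continuousWithinAt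
  have hvc : ContinuousOn v (Icc a b) := fun x hx => (hv x hx).continuousAt.continuousWithinAt
  set F' : ℝ → ℝ := fun x => (-l ^ 2 - h x ^ 2) * v x ^ 2 + h x * (2 * v x * v' x)
  have hF' : ∀ x ∈ uIcc a b, HasDerivAt (fun y => h y * v y ^ 2) (F' x) x := by
    intro x hx
    rw [uIcc_of_le hab] at hx
    refine ((hh x hx).mul ((hv x hx).pow 2)).congr_deriv ?_
    simp only [F', Pi.pow_apply]
    ring
  have hF'int : ∫ x in a..b, F' x = 0 := by
    rw [integral_eq_sub_of_hasDerivAt hF' (ContinuousOn.intervalIntegrable_of_Icc hab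
      (by fun_prop))]
    simp [ha, hb]
  have hsplit : ∫ x in a..b, v' x ^ 2 =
      (∫ x in a..b, (v' x - h x * v x) ^ 2) + l ^ 2 * (∫ x in a..b, v x ^ 2) +
        ∫ x in a..b, F' x := by
    rw [← integral_const_mul, ← integral_add, ← integral_add]
    · exact integral_congr fun x _ => by simp only [F']; ring
    all_goals exact ContinuousOn.intervalIntegrable_of_Icc hab (by fun_prop)
  have hrem : 0 ≤ ∫ x in a..b, (v' x - h x * v x) ^ 2 :=
    integral_nonneg hab fun _ _ => sq_nonneg _
  linarith

/-- Wirtinger's inequality on `[a, b]`. -/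
theorem pi_div_sq_mul_integral_sq_le_integral_deriv_sq {a b : ℝ} (hab : a < b)
    {v v' : ℝ → ℝ} (hv : ∀ x ∈ Icc a b, HasDerivAt v (v' x) x)
    (hv' : ContinuousOn v' (Icc a b)) (ha : v a = 0) (hb : v b = 0) :
    (π / (b - a)) ^ 2 * ∫ x in a..b, v x ^ 2 ≤ ∫ x in a..b, v' x ^ 2 := by
  have hlen : 0 < b - a := sub_pos.2 hab
  have hbelow : ∀ l ∈ Ioo 0 (π / (b - a)),
      l ^ 2 * ∫ x in a..b, v x ^ 2 ≤ ∫ x in a..b, v' x ^ 2 := by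
    rintro l ⟨hl0, hl⟩
    have hlπ : l * (b - a) < π := (lt_div_iff₀ hlen).1 hl
    refine sq_mul_integral_sq_le_integral_sq_of_riccati hab.le
      (fun x hx => hasDerivAt_neg_mul_tan (m := (a + b) / 2) ?_) hv hv' ha hb
    exact (cos_pos_of_mem_Ioo ⟨by nlinarith [hx.1, hx.2], by nlinarith [hx.1, hx.2]⟩).ne'
  have hlim : Tendsto (fun l : ℝ => l ^ 2 * ∫ x in a..b, v x ^ 2) (𝓝[<] (π / (b - a)))
      (𝓝 ((π / (b - a)) ^ 2 * ∫ x in a..b, v x ^ 2)) :=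
    (Continuous.tendsto (by fun_prop) _).mono_left nhdsWithin_le_nhds
  exact le_of_tendsto hlim (eventually_of_mem (Ioo_mem_nhdsLT (by positivity)) hbelow)

theorem integral_add_mul_sq_le {a b s : ℝ} (hab : a ≤ b) {f g : ℝ → ℝ}
    (hf : ContinuousOn f (Icc a b)) (hg : ContinuousOn g (Icc a b)) :
    ∫ x in a..b, (f x + s * g x) ^ 2 ≤
      2 * (∫ x in a..b, f x ^ 2) + 2 * s ^ 2 * ∫ x in a..b, g x ^ 2 := by
  calc ∫ x in a..b, (f x + s * g x) ^ 2
      ≤ ∫ x in a..b, (2 * f x ^ 2 + 2 * s ^ 2 * g x ^ 2) := by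
        refine integral_mono_on hab ?_ ?_ fun x _ => by nlinarith [sq_nonneg (f x - s * g x)]
        all_goals exact ContinuousOn.intervalIntegrable_of_Icc hab (by fun_prop)
    _ = _ := by
        have hf2 : IntervalIntegrable (fun x => 2 * f x ^ 2) MeasureTheory.volume a b :=
          ContinuousOn.intervalIntegrable_of_Icc hab (by fun_prop)
        have hg2 : IntervalIntegrable (fun x => 2 * s ^ 2 * g x ^ 2) MeasureTheory.volume a b :=
          ContinuousOn.intervalIntegrable_of_Icc hab (by fun_prop)
        rw [integral_add hf2 hg2, integral_const_mul, integral_const_mul]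

/-- The norm-equivalence estimate (4.14) for the Lyapunov functional of the damped wave
PDE (Case C): for `c, σ > 0`, a `C¹` function `v` with `v(0) = v(1) = 0` and continuous
`φ`, the functional
`Φ = ((c² + 1)/σ)∫₀¹(v')² + (1/σ)∫₀¹φ² + (1/(σc²))∫₀¹(φ + σv)²` satisfies
`(1/σ)(∫₀¹(v')² + ∫₀¹φ²) ≤ Φ ≤ (1/σ)max(c² + 1 + 2σ²/(c²π²), 1 + 2/c²)(∫₀¹(v')² + ∫₀¹φ²)`. -/
theorem wave_lyapunov_norm_equivalence (c σ : ℝ) (hc : 0 < c) (hσ : 0 < σ)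
    (v φ : ℝ → ℝ) (hv : ContDiff ℝ 1 v) (hv0 : v 0 = 0) (hv1 : v 1 = 0)
    (hφ : Continuous φ)
    (Φ : ℝ)
    (hΦ : Φ = ((c ^ 2 + 1) / σ) * (∫ x in (0 : ℝ)..1, (deriv v x) ^ 2) +
      (1 / σ) * (∫ x in (0 : ℝ)..1, (φ x) ^ 2) +
      (1 / (σ * c ^ 2)) * ∫ x in (0 : ℝ)..1, (φ x + σ * v x) ^ 2) :
    (1 / σ) * ((∫ x in (0 : ℝ)..1, (deriv v x) ^ 2) + ∫ x in (0 : ℝ)..1, (φ x) ^ 2) ≤ Φ ∧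
    Φ ≤ (1 / σ) * max (c ^ 2 + 1 + 2 * σ ^ 2 / (c ^ 2 * Real.pi ^ 2)) (1 + 2 / c ^ 2) *
      ((∫ x in (0 : ℝ)..1, (deriv v x) ^ 2) + ∫ x in (0 : ℝ)..1, (φ x) ^ 2) := by
  have hWirtinger :
      π ^ 2 * ∫ x in (0 : ℝ)..1, v x ^ 2 ≤ ∫ x in (0 : ℝ)..1, deriv v x ^ 2 := by
    simpa using pi_div_sq_mul_integral_sq_le_integral_deriv_sq zero_lt_one
      (fun x _ => (hv.differentiable one_ne_zero x).hasDerivAt)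
      (hv.continuous_deriv le_rfl).continuousOn hv0 hv1
  have hsum := integral_add_mul_sq_le (s := σ) zero_le_one hφ.continuousOn
    hv.continuous.continuousOn
  set A := ∫ x in (0 : ℝ)..1, deriv v x ^ 2
  set B := ∫ x in (0 : ℝ)..1, φ x ^ 2
  set C := ∫ x in (0 : ℝ)..1, (φ x + σ * v x) ^ 2
  have hA : 0 ≤ A := integral_nonneg zero_le_one fun _ _ => sq_nonneg _
  have hB : 0 ≤ B := integral_nonneg zero_le_one fun _ _ => sq_nonneg _
  have hC : 0 ≤ C := integral_nonneg zero_le_one fun _ _ => sq_nonneg _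
  have hCA : C ≤ 2 * B + 2 * σ ^ 2 * (A / π ^ 2) :=
    hsum.trans (by gcongr; rwa [le_div_iff₀ (by positivity), mul_comm])
  refine ⟨?_, ?_⟩
  · have hrest : 0 ≤ c ^ 2 / σ * A + 1 / (σ * c ^ 2) * C := by positivity
    rw [hΦ]
    linear_combination hrest
  · set M := max (c ^ 2 + 1 + 2 * σ ^ 2 / (c ^ 2 * π ^ 2)) (1 + 2 / c ^ 2)
    calc Φ ≤ (c ^ 2 + 1) / σ * A + 1 / σ * B +
          1 / (σ * c ^ 2) * (2 * B + 2 * σ ^ 2 * (A / π ^ 2)) := by rw [hΦ]; gcongr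
      _ = 1 / σ * ((c ^ 2 + 1 + 2 * σ ^ 2 / (c ^ 2 * π ^ 2)) * A + (1 + 2 / c ^ 2) * B) := by
          field_simp; ring
      _ ≤ 1 / σ * (M * A + M * B) := by gcongr; exacts [le_max_left _ _, le_max_right _ _]
      _ = 1 / σ * M * (A + B) := by ring
end

section
/- Let σ > 0 and θ₁, θ₂ ∈ ℝ with θ₁ ≠ 0 and θ₁θ₂ = 2(1 + σ + π²). Define y(t) := ((1 + σ + π²)/θ₁)·e^t, v(t, x) := e^t·sin(πx), K(x, η) := sin(πx)·η, and L(v, φ) := ∫₀¹ sin(πx)·v(x) dx. Then: (i) |K(x, η)| ≤ |η| for all x ∈ [0, 1] and η ∈ ℝ; (ii) for every continuously differentiable v : [0, 1] → ℝ with v(0) = v(1) = 0 and every square-integrable φ : [0, 1] → ℝ, |L(v, φ)| ≤ ( ∫₀¹ (v'(x))² dx + ∫₀¹ φ(x)² dx )^{1/2}; (iii) for all t ≥ 0 and x ∈ [0, 1]: ∂²v/∂t²(t, x) = ∂²v/∂x²(t, x) − σ·∂v/∂t(t, x) + θ₁·K(x, y(t)), v(t, 0) = v(t, 1) = 0, and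 y'(t) = θ₂·L(v(t, ·), ∂v/∂t(t, ·)). -/
open MeasureTheory

private lemma sinpi_hasDeriv (x : ℝ) :
    HasDerivAt (fun x => Real.sin (Real.pi * x)) (Real.pi * Real.cos (Real.pi * x)) x := by
  have h := (Real.hasDerivAt_sin (Real.pi * x)).comp x ((hasDerivAt_id x).const_mul Real.pi)
  simpa [Function.comp_def, mul_comm] using h

private lemma cospi_hasDeriv (x : ℝ) :
    HasDerivAt (fun x => Real.cos (Real.pi * x)) (-(Real.pi * Real.sin (Real.pi * x))) x := by
  have h := (Real.hasDerivAt_cos (Real.pi * x)).comp x ((hasDerivAt_id x).const_mul Real.pi)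
  simpa [Function.comp_def, mul_comm] using h

private lemma int_cos_sq : ∫ x in (0:ℝ)..1, Real.cos (Real.pi * x) ^ 2 = 1/2 := by
  have hπ : Real.pi ≠ 0 := Real.pi_ne_zero
  have hd : ∀ x ∈ Set.uIcc (0:ℝ) 1,
      HasDerivAt (fun x => x/2 + Real.sin (Real.pi*x) * Real.cos (Real.pi*x) / (2*Real.pi))
        (Real.cos (Real.pi*x)^2) x := by
    intro x _
    have h := ((hasDerivAt_id x).div_const 2).add
      (((sinpi_hasDeriv x).mul (cospi_hasDeriv x)).div_const (2*Real.pi))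
    refine h.congr_deriv ?_
    have := Real.sin_sq_add_cos_sq (Real.pi*x)
    field_simp
    linear_combination (-1 : ℝ) * this
  rw [intervalIntegral.integral_eq_sub_of_hasDerivAt hd
    (((Real.continuous_cos.comp (continuous_const.mul continuous_id)).pow 2).intervalIntegrable _ _)]
  simp [Real.sin_pi]

private lemma int_sin_sq : ∫ x in (0:ℝ)..1, Real.sin (Real.pi * x) ^ 2 = 1/2 := by
  have hπ : Real.pi ≠ 0 := Real.pi_ne_zero
  have hd : ∀ x ∈ Set.uIcc (0:ℝ) 1,
      HasDerivAt (fun x => x/2 - Real.sin (Real.pi*x) * Real.cos (Real.pi*x) / (2*Real.pi))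
        (Real.sin (Real.pi*x)^2) x := by
    intro x _
    have h := ((hasDerivAt_id x).div_const 2).sub
      (((sinpi_hasDeriv x).mul (cospi_hasDeriv x)).div_const (2*Real.pi))
    refine h.congr_deriv ?_
    have := Real.sin_sq_add_cos_sq (Real.pi*x)
    field_simp
    linear_combination (-1 : ℝ) * this
  rw [intervalIntegral.integral_eq_sub_of_hasDerivAt hd
    (((Real.continuous_sin.comp (continuous_const.mul continuous_id)).pow 2).intervalIntegrable _ _)]
  simp [Real.sin_pi]

private lemma parts_aux (u : ℝ → ℝ) (hu : ContDiff ℝ 1 u) (h0 : u 0 = 0) (h1 : u 1 = 0) :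
    ∫ x in (0:ℝ)..1, Real.sin (Real.pi*x) * u x
      = (1/Real.pi) * ∫ x in (0:ℝ)..1, Real.cos (Real.pi*x) * deriv u x := by
  have hπ : Real.pi ≠ 0 := Real.pi_ne_zero
  have hud : ∀ x ∈ Set.uIcc (0:ℝ) 1, HasDerivAt u (deriv u x) x :=
    fun x _ => ((hu.differentiable one_ne_zero) x).hasDerivAt
  have hvd : ∀ x ∈ Set.uIcc (0:ℝ) 1,
      HasDerivAt (fun x => -(Real.cos (Real.pi*x))/Real.pi) (Real.sin (Real.pi*x)) x := by
    intro x _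
    have h := ((cospi_hasDeriv x).neg).div_const Real.pi
    refine h.congr_deriv ?_
    field_simp
  have hcont : Continuous (deriv u) := hu.continuous_deriv le_rfl
  have key := intervalIntegral.integral_mul_deriv_eq_deriv_mul hud hvd
    (hcont.intervalIntegrable 0 1)
    ((Real.continuous_sin.comp (continuous_const.mul continuous_id)).intervalIntegrable 0 1)
  have h2 : ∫ x in (0:ℝ)..1, Real.sin (Real.pi*x) * u x
      = ∫ x in (0:ℝ)..1, u x * Real.sin (Real.pi*x) := by
    congr 1; ext x; ring
  rw [h2, key, h0, h1]
  have h3 : ∀ x : ℝ, deriv u x * (-(Real.cos (Real.pi*x))/Real.pi)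
      = (-(1/Real.pi)) * (Real.cos (Real.pi*x) * deriv u x) := by intro x; ring
  simp_rw [h3]
  rw [intervalIntegral.integral_const_mul]
  ring

private lemma cs_aux (u : ℝ → ℝ) (hu : ContDiff ℝ 1 u) :
    |∫ x in (0:ℝ)..1, Real.cos (Real.pi*x) * deriv u x|
      ≤ Real.sqrt (1/2) * Real.sqrt (∫ x in (0:ℝ)..1, (deriv u x)^2) := by
  set μ := volume.restrict (Set.Ioc (0:ℝ) 1) with hμ
  haveI : IsFiniteMeasure μ := by
    constructor
    rw [hμ, Measure.restrict_apply_univ]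
    simp
  have hcont : Continuous (deriv u) := hu.continuous_deriv le_rfl
  have hccont : Continuous (fun x => Real.cos (Real.pi*x)) :=
    Real.continuous_cos.comp (continuous_const.mul continuous_id)
  obtain ⟨z, -, hz⟩ := isCompact_Icc.exists_isMaxOn (Set.nonempty_Icc.2 zero_le_one)
    (hcont.norm.continuousOn (s := Set.Icc (0:ℝ) 1))
  have hmf : MemLp (fun x => Real.cos (Real.pi*x)) (ENNReal.ofReal 2) μ :=
    MemLp.of_bound hccont.aestronglyMeasurable.restrict 1
      (Filter.Eventually.of_forall fun x => by
        simpa [Real.norm_eq_abs] using Real.abs_cos_le_one (Real.pi*x))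
  have hmg : MemLp (deriv u) (ENNReal.ofReal 2) μ :=
    MemLp.of_bound hcont.aestronglyMeasurable.restrict ‖deriv u z‖
      ((ae_restrict_iff' measurableSet_Ioc).2 (Filter.Eventually.of_forall fun x hx =>
        hz ⟨le_of_lt hx.1, hx.2⟩))
  have hpq : Real.HolderConjugate 2 2 := Real.HolderConjugate.two_two
  have hold := integral_mul_norm_le_Lp_mul_Lq (μ := μ) hpq hmf hmg
  have e1 : |∫ x in (0:ℝ)..1, Real.cos (Real.pi*x) * deriv u x|
      ≤ ∫ a, ‖Real.cos (Real.pi*a)‖ * ‖deriv u a‖ ∂μ := by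
    rw [intervalIntegral.integral_of_le zero_le_one, ← hμ]
    calc |∫ a, Real.cos (Real.pi*a) * deriv u a ∂μ|
        ≤ ∫ a, |Real.cos (Real.pi*a)| * |deriv u a| ∂μ := by
          simpa [Real.norm_eq_abs, abs_mul] using
            norm_integral_le_integral_norm (μ := μ) (fun x => Real.cos (Real.pi*x) * deriv u x)
      _ = ∫ a, ‖Real.cos (Real.pi*a)‖ * ‖deriv u a‖ ∂μ := by
          simp [Real.norm_eq_abs]
  have e2 : ∫ a, ‖Real.cos (Real.pi*a)‖ ^ (2:ℝ) ∂μ = 1/2 := by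
    have : ∀ a : ℝ, ‖Real.cos (Real.pi*a)‖ ^ (2:ℝ) = Real.cos (Real.pi*a) ^ 2 := by
      intro a
      rw [show (2:ℝ) = ((2:ℕ):ℝ) by norm_num, Real.rpow_natCast, Real.norm_eq_abs, sq_abs]
    simp_rw [this]
    rw [hμ, ← intervalIntegral.integral_of_le zero_le_one, int_cos_sq]
  have e3 : ∫ a, ‖deriv u a‖ ^ (2:ℝ) ∂μ = ∫ x in (0:ℝ)..1, (deriv u x)^2 := by
    have : ∀ a : ℝ, ‖deriv u a‖ ^ (2:ℝ) = deriv u a ^ 2 := by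
      intro a
      rw [show (2:ℝ) = ((2:ℕ):ℝ) by norm_num, Real.rpow_natCast, Real.norm_eq_abs, sq_abs]
    simp_rw [this]
    rw [hμ, ← intervalIntegral.integral_of_le zero_le_one]
  rw [e2, e3] at hold
  calc |∫ x in (0:ℝ)..1, Real.cos (Real.pi*x) * deriv u x|
      ≤ ∫ a, ‖Real.cos (Real.pi*a)‖ * ‖deriv u a‖ ∂μ := e1
    _ ≤ ((1:ℝ)/2) ^ ((1:ℝ)/2) * (∫ x in (0:ℝ)..1, (deriv u x)^2) ^ ((1:ℝ)/2) := hold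
    _ = Real.sqrt (1/2) * Real.sqrt (∫ x in (0:ℝ)..1, (deriv u x)^2) := by
        rw [Real.sqrt_eq_rpow, Real.sqrt_eq_rpow]

/-- The open-loop instability example for Case C (wave PDE with viscous damping, `c = 1`):
with `θ₁ ≠ 0`, `θ₁θ₂ = 2(1 + σ + π²)`, `y(t) = ((1 + σ + π²)/θ₁)e^t`,
`v(t,x) = e^t sin(πx)`, `K(x,η) = sin(πx)η` and `L(v,φ) = ∫₀¹ sin(πx)v(x) dx`,
the structural bounds (4.11) hold and `(y, v)` is an exponentially growing solution of
the open-loop system (4.10). -/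
theorem wave_open_loop_instability_example (σ θ₁ θ₂ : ℝ)
    (hσ : 0 < σ) (hθ₁ : θ₁ ≠ 0) (hθ : θ₁ * θ₂ = 2 * (1 + σ + Real.pi ^ 2))
    (y : ℝ → ℝ) (v : ℝ → ℝ → ℝ) (K : ℝ → ℝ → ℝ) (L : (ℝ → ℝ) → (ℝ → ℝ) → ℝ)
    (hy : ∀ t, y t = ((1 + σ + Real.pi ^ 2) / θ₁) * Real.exp t)
    (hv : ∀ t x, v t x = Real.exp t * Real.sin (Real.pi * x))
    (hK : ∀ x η, K x η = Real.sin (Real.pi * x) * η)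
    (hL : ∀ u φ, L u φ = ∫ x in (0 : ℝ)..1, Real.sin (Real.pi * x) * u x) :
    (∀ x ∈ Set.Icc (0 : ℝ) 1, ∀ η : ℝ, |K x η| ≤ |η|) ∧
    (∀ u : ℝ → ℝ, ContDiff ℝ 1 u → u 0 = 0 → u 1 = 0 →
      ∀ φ : ℝ → ℝ, MemLp φ 2 (volume.restrict (Set.Icc (0 : ℝ) 1)) →
      |L u φ| ≤ Real.sqrt ((∫ x in (0 : ℝ)..1, (deriv u x) ^ 2) +
        ∫ x in (0 : ℝ)..1, (φ x) ^ 2)) ∧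
    (∀ t, 0 ≤ t → ∀ x ∈ Set.Icc (0 : ℝ) 1,
      deriv (fun s => deriv (fun r => v r x) s) t =
        deriv (deriv (v t)) x - σ * deriv (fun s => v s x) t + θ₁ * K x (y t) ∧
      v t 0 = 0 ∧ v t 1 = 0 ∧
      deriv y t = θ₂ * L (v t) (fun ξ => deriv (fun s => v s ξ) t)) := by
  have hπ : Real.pi ≠ 0 := Real.pi_ne_zero
  refine ⟨?_, ?_, ?_⟩
  · -- (i)
    intro x _ η
    rw [hK, abs_mul]
    calc |Real.sin (Real.pi * x)| * |η| ≤ 1 * |η| :=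
          mul_le_mul_of_nonneg_right (Real.abs_sin_le_one _) (abs_nonneg _)
      _ = |η| := one_mul _
  · -- (ii)
    intro u hu h0 h1 φ _
    have hI2 : 0 ≤ ∫ x in (0:ℝ)..1, (deriv u x) ^ 2 :=
      intervalIntegral.integral_nonneg zero_le_one (fun x _ => sq_nonneg _)
    have hφ2 : 0 ≤ ∫ x in (0:ℝ)..1, (φ x) ^ 2 :=
      intervalIntegral.integral_nonneg zero_le_one (fun x _ => sq_nonneg _)
    rw [hL, parts_aux u hu h0 h1, abs_mul]
    have hcs := cs_aux u hu
    have hπpos : (0:ℝ) < Real.pi := Real.pi_pos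
    calc |1/Real.pi| * |∫ x in (0:ℝ)..1, Real.cos (Real.pi*x) * deriv u x|
        ≤ |1/Real.pi| * (Real.sqrt (1/2) * Real.sqrt (∫ x in (0:ℝ)..1, (deriv u x)^2)) :=
          mul_le_mul_of_nonneg_left hcs (abs_nonneg _)
      _ ≤ 1 * (1 * Real.sqrt (∫ x in (0:ℝ)..1, (deriv u x)^2)) := by
          have h4 : |1/Real.pi| ≤ 1 := by
            rw [abs_of_pos (by positivity)]
            rw [div_le_one hπpos]
            linarith [Real.pi_gt_three]
          have h5 : Real.sqrt (1/2) ≤ 1 := by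
            rw [show (1:ℝ) = Real.sqrt 1 by simp]
            exact Real.sqrt_le_sqrt (by norm_num)
          have h6 : (0:ℝ) ≤ Real.sqrt (∫ x in (0:ℝ)..1, (deriv u x)^2) := Real.sqrt_nonneg _
          have ha : |1/Real.pi| * (Real.sqrt (1/2) * Real.sqrt (∫ x in (0:ℝ)..1, (deriv u x)^2))
              ≤ 1 * (Real.sqrt (1/2) * Real.sqrt (∫ x in (0:ℝ)..1, (deriv u x)^2)) :=
            mul_le_mul_of_nonneg_right h4 (mul_nonneg (Real.sqrt_nonneg _) h6)
          have hb : Real.sqrt (1/2) * Real.sqrt (∫ x in (0:ℝ)..1, (deriv u x)^2)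
              ≤ 1 * Real.sqrt (∫ x in (0:ℝ)..1, (deriv u x)^2) :=
            mul_le_mul_of_nonneg_right h5 h6
          linarith
      _ = Real.sqrt (∫ x in (0:ℝ)..1, (deriv u x)^2) := by ring
      _ ≤ Real.sqrt ((∫ x in (0:ℝ)..1, (deriv u x)^2) + ∫ x in (0:ℝ)..1, (φ x)^2) :=
          Real.sqrt_le_sqrt (le_add_of_nonneg_right hφ2)
  · -- (iii)
    intro t _ x _
    have hvt : v t = fun x => Real.exp t * Real.sin (Real.pi * x) := funext fun x => hv t x
    have hvx : (fun s => v s x) = fun s => Real.exp s * Real.sin (Real.pi * x) :=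
      funext fun s => hv s x
    have hdt : ∀ s : ℝ, deriv (fun r => v r x) s = Real.exp s * Real.sin (Real.pi * x) := by
      intro s
      rw [hvx]
      exact ((Real.hasDerivAt_exp s).mul_const _).deriv
    have hdt2 : deriv (fun s => deriv (fun r => v r x) s) t
        = Real.exp t * Real.sin (Real.pi * x) := by
      have : (fun s => deriv (fun r => v r x) s)
          = fun s => Real.exp s * Real.sin (Real.pi * x) := funext hdt
      rw [this]
      exact ((Real.hasDerivAt_exp t).mul_const _).deriv
    have hdx1 : deriv (v t) = fun x' => Real.exp t * (Real.pi * Real.cos (Real.pi * x')) := by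
      funext x'
      rw [hvt]
      exact ((sinpi_hasDeriv x').const_mul (Real.exp t)).deriv
    have hdx2 : deriv (deriv (v t)) x
        = Real.exp t * (Real.pi * (-(Real.pi * Real.sin (Real.pi * x)))) := by
      rw [hdx1]
      exact (((cospi_hasDeriv x).const_mul Real.pi).const_mul (Real.exp t)).deriv
    have hdy : deriv y t = ((1 + σ + Real.pi ^ 2) / θ₁) * Real.exp t := by
      have : y = fun t => ((1 + σ + Real.pi ^ 2) / θ₁) * Real.exp t := funext hy
      rw [this]
      exact ((Real.hasDerivAt_exp t).const_mul _).deriv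
    refine ⟨?_, ?_, ?_, ?_⟩
    · rw [hdt2, hdx2, hdt t, hK, hy]
      field_simp
      ring
    · rw [hv]; simp
    · rw [hv]; simp [Real.sin_pi]
    · rw [hdy, hL]
      have h7 : ∀ x : ℝ, Real.sin (Real.pi * x) * v t x
          = Real.exp t * Real.sin (Real.pi * x) ^ 2 := by
        intro x; rw [hv]; ring
      simp_rw [h7]
      rw [intervalIntegral.integral_const_mul, int_sin_sq]
      field_simp
      linear_combination (-1 : ℝ) * hθ
end
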